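/- arXiv:1902.07242 — 7 statements merged into one kernel-verified Lean document; each statement's English description precedes it below -/
import Mathlib

section
/- Let c > 0 and let f be a meromorphic function on the open unit disk 𝔻 whose spherical derivative satisfies f^♯(z) ≥ c for all z ∈ 𝔻 (i.e. f ∈ ℱ_c). Then c ≤ 1/2. -/
/-!
Replacing `f` by `1 / f` if necessary, which preserves `f^♯`, we may assume that `f` is analytic
at `0`; put `a = f 0`. Let `φ = (f - a) / (1 + ā f)` be `f` followed by the rotation of the Riemann
sphere taking `a` to `0`, and `g = φ / φ'`. From `|w - a| |1 + ā w| ≤ (1 + |a|²)(1 + |w|²) / 2` and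
`f^♯ ≥ c` we get `|g| ≤ 1 / (2c)` wherever `f` is analytic, so the poles of `f` are removable
singularities of `g`. As `g 0 = 0` and `g' 0 = 1`, the Schwarz lemma gives `1 ≤ 1 / (2c)`.
-/

open Complex Metric ComplexConjugate

open scoped Classical in
/-- The spherical derivative of a meromorphic function `f` on the unit disk:
`|f'(z)|/(1+|f(z)|^2)` where `f` is analytic, and `|(1/f)'(z)|/(1+|(1/f)(z)|^2)` at poles. -/
noncomputable def sphDeriv (f : ℂ → ℂ) (z : ℂ) : ℝ :=
  if AnalyticAt ℂ f z then
    ‖deriv f z‖ / (1 + (‖f z‖) ^ 2)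
  else
    ‖deriv (fun w => (f w)⁻¹) z‖ / (1 + (‖(f z)⁻¹‖) ^ 2)

/-- `f` is meromorphic on the open unit disk: at each point it is either analytic,
or has a pole, i.e. `1/f` is analytic there and vanishes there. -/
def MeroOnDisk (f : ℂ → ℂ) : Prop :=
  ∀ z ∈ ball (0 : ℂ) 1,
    AnalyticAt ℂ f z ∨ (AnalyticAt ℂ (fun w => (f w)⁻¹) z ∧ (f z)⁻¹ = 0)

/-- A meromorphic function on the unit disk is locally univalent: `f'(z) ≠ 0` at every
point where `f` is analytic, and every pole is simple (`1/f` has a simple zero). -/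
def LocUnivOnDisk (f : ℂ → ℂ) : Prop :=
  ∀ z ∈ ball (0 : ℂ) 1,
    (AnalyticAt ℂ f z → deriv f z ≠ 0) ∧
    (¬ AnalyticAt ℂ f z → deriv (fun w => (f w)⁻¹) z ≠ 0)

open Filter Topology Set

section SphDeriv

variable {f : ℂ → ℂ} {z : ℂ}

lemma sphDeriv_of_analyticAt (hA : AnalyticAt ℂ f z) :
    sphDeriv f z = ‖deriv f z‖ / (1 + ‖f z‖ ^ 2) := by
  rw [sphDeriv, if_pos hA]

lemma sphDeriv_of_not_analyticAt (hA : ¬AnalyticAt ℂ f z) :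
    sphDeriv f z = ‖deriv (fun w => (f w)⁻¹) z‖ / (1 + ‖(f z)⁻¹‖ ^ 2) := by
  rw [sphDeriv, if_neg hA]

lemma mul_one_add_sq_le_norm_deriv {c : ℝ} (hA : AnalyticAt ℂ f z) (hs : c ≤ sphDeriv f z) :
    c * (1 + ‖f z‖ ^ 2) ≤ ‖deriv f z‖ := by
  rwa [sphDeriv_of_analyticAt hA, le_div_iff₀ (by positivity)] at hs

lemma deriv_ne_zero_of_sphDeriv_pos (hA : AnalyticAt ℂ f z) (hs : 0 < sphDeriv f z) :
    deriv f z ≠ 0 := by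
  intro h
  simp [sphDeriv_of_analyticAt hA, h] at hs

end SphDeriv

section RemovableSingularity

variable {E : Type*} [NormedAddCommGroup E] [NormedSpace ℂ E] [CompleteSpace E]

lemma exists_differentiableOn_mapsTo_closedBall_eqOn {U V : Set ℂ} (hV : IsOpen V)
    {g : ℂ → E} {M : ℝ} (hd : DifferentiableOn ℂ g V) (hM : MapsTo g V (closedBall 0 M))
    (hpunct : ∀ z ∈ U \ V, ∀ᶠ w in 𝓝[≠] z, w ∈ V) :
    ∃ G : ℂ → E, DifferentiableOn ℂ G U ∧ MapsTo G U (closedBall 0 M) ∧ EqOn G g V := by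
  classical
  set G : ℂ → E := fun z => if z ∈ V then g z else limUnder (𝓝[≠] z) g
  have hGV : EqOn G g V := fun z hz => if_pos hz
  have hG_near : ∀ z ∈ U \ V, G =ᶠ[𝓝[≠] z] g := fun z hz =>
    (hpunct z hz).mono fun w hw => hGV hw
  have hlim : ∀ z ∈ U \ V, Tendsto g (𝓝[≠] z) (𝓝 (G z)) := by
    intro z hz
    rw [show G z = limUnder (𝓝[≠] z) g from if_neg hz.2]
    refine Complex.tendsto_limUnder_of_differentiable_on_punctured_nhds_of_bounded_under
      ((hpunct z hz).mono fun w hw => hd.differentiableAt (hV.mem_nhds hw)) ⟨M + ‖g z‖, ?_⟩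
    rw [eventually_map]
    filter_upwards [hpunct z hz] with w hw
    exact norm_sub_le_of_le (mem_closedBall_zero_iff.mp (hM hw)) le_rfl
  have hdiffV : ∀ w ∈ V, DifferentiableAt ℂ G w := fun w hw =>
    (hGV.eventuallyEq_of_mem (hV.mem_nhds hw)).differentiableAt_iff.mpr
      (hd.differentiableAt (hV.mem_nhds hw))
  refine ⟨G, fun z hz => ?_, fun z hz => ?_, hGV⟩
  · by_cases hzV : z ∈ V
    · exact (hdiffV z hzV).differentiableWithinAt
    · have hcont : ContinuousAt G z := by
        rw [← continuousWithinAt_compl_self, ContinuousWithinAt]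
        exact (hlim z ⟨hz, hzV⟩).congr' (hG_near z ⟨hz, hzV⟩).symm
      exact (Complex.analyticAt_of_differentiable_on_punctured_nhds_of_continuousAt
        ((hpunct z ⟨hz, hzV⟩).mono hdiffV) hcont).differentiableAt.differentiableWithinAt
  · by_cases hzV : z ∈ V
    · rw [hGV hzV]; exact hM hzV
    · exact isClosed_closedBall.mem_of_tendsto (hlim z ⟨hz, hzV⟩)
        ((hpunct z ⟨hz, hzV⟩).mono fun w hw => hM hw)

end RemovableSingularity

section Inversion

variable {f : ℂ → ℂ} {z : ℂ}

lemma eventually_analyticAt_of_inv (hF : AnalyticAt ℂ (fun w => (f w)⁻¹) z)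
    (hA : ¬AnalyticAt ℂ f z) : ∀ᶠ w in 𝓝[≠] z, AnalyticAt ℂ f w := by
  have hinv : (fun w => ((f w)⁻¹)⁻¹) = f := funext fun w => inv_inv (f w)
  rcases hF.eventually_eq_zero_or_eventually_ne_zero with hzero | hne
  · refine absurd ((analyticAt_const (v := (0 : ℂ))).congr ?_) hA
    filter_upwards [hzero] with w hw
    exact (inv_eq_zero.mp hw).symm
  · filter_upwards [hne, hF.eventually_analyticAt.filter_mono nhdsWithin_le_nhds] with w hw hFw
    exact hinv ▸ hFw.inv hw

lemma MeroOnDisk.inv (hf : MeroOnDisk f) : MeroOnDisk fun w => (f w)⁻¹ := by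
  intro w hw
  by_cases hA : AnalyticAt ℂ f w
  · by_cases h0 : f w = 0
    · exact Or.inr ⟨by simpa only [inv_inv] using hA, by rw [inv_inv, h0]⟩
    · exact Or.inl (hA.inv h0)
  · exact Or.inl ((hf w hw).resolve_left hA).1

lemma not_analyticAt_inv_of_eq_zero (hA : AnalyticAt ℂ f z) (h0 : f z = 0)
    (hd : deriv f z ≠ 0) : ¬AnalyticAt ℂ (fun w => (f w)⁻¹) z := by
  intro hF
  have hne : ∀ᶠ w in 𝓝[≠] z, f w ≠ 0 :=
    hA.eventually_eq_zero_or_eventually_ne_zero.resolve_left fun h =>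
      hd ((EventuallyEq.deriv_eq (f₁ := f) (f := fun _ => 0) h).trans (deriv_const z 0))
  have hlim : Tendsto (fun w => f w * (f w)⁻¹) (𝓝[≠] z) (𝓝 0) := by
    have hcont : ContinuousAt (fun w => f w * (f w)⁻¹) z := hA.continuousAt.mul hF.continuousAt
    simpa [h0] using hcont.tendsto.mono_left nhdsWithin_le_nhds
  have hone : Tendsto (fun w => f w * (f w)⁻¹) (𝓝[≠] z) (𝓝 1) :=
    tendsto_const_nhds.congr' (hne.mono fun w hw => (mul_inv_cancel₀ hw).symm)
  exact one_ne_zero (tendsto_nhds_unique hone hlim)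

lemma sphDeriv_inv (hmero : AnalyticAt ℂ f z ∨ AnalyticAt ℂ (fun w => (f w)⁻¹) z)
    (hpos : 0 < sphDeriv f z) :
    sphDeriv (fun w => (f w)⁻¹) z = sphDeriv f z := by
  by_cases hA : AnalyticAt ℂ f z
  · have hd := deriv_ne_zero_of_sphDeriv_pos hA hpos
    by_cases h0 : f z = 0
    · rw [sphDeriv_of_not_analyticAt (not_analyticAt_inv_of_eq_zero hA h0 hd),
        sphDeriv_of_analyticAt hA]
      simp only [inv_inv]
    · have ht : ‖f z‖ ≠ 0 := norm_ne_zero_iff.mpr h0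
      rw [sphDeriv_of_analyticAt (f := fun w => (f w)⁻¹) (hA.inv h0), sphDeriv_of_analyticAt hA,
        deriv_fun_inv'' hA.differentiableAt h0, norm_div, norm_neg, norm_pow, norm_inv]
      field_simp
      ring
  · rw [sphDeriv_of_analyticAt (hmero.resolve_left hA), sphDeriv_of_not_analyticAt hA]

end Inversion

lemma norm_sub_mul_one_add_conj_mul_le (a w : ℂ) :
    ‖(w - a) * (1 + conj a * w)‖ ≤ (1 + ‖a‖ ^ 2) * (1 + ‖w‖ ^ 2) / 2 := by
  have hsum : ‖w - a‖ ^ 2 + ‖1 + conj a * w‖ ^ 2 = (1 + ‖a‖ ^ 2) * (1 + ‖w‖ ^ 2) := by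
    simp only [Complex.sq_norm, Complex.normSq_apply, Complex.sub_re, Complex.sub_im,
      Complex.add_re, Complex.add_im, Complex.mul_re, Complex.mul_im, Complex.conj_re,
      Complex.conj_im, Complex.one_re, Complex.one_im]
    ring
  rw [norm_mul]
  nlinarith [sq_nonneg (‖w - a‖ - ‖1 + conj a * w‖)]

/-- `φ / φ'` for `φ = (f - a) / (1 + ā f)`. -/
noncomputable def rotQuot (f : ℂ → ℂ) (a z : ℂ) : ℂ :=
  (f z - a) * (1 + conj a * f z) / ((1 + ‖a‖ ^ 2 : ℝ) * deriv f z)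

section RotQuot

variable {f : ℂ → ℂ} {z : ℂ}

lemma one_add_sq_norm_ne_zero (a : ℂ) : ((1 + ‖a‖ ^ 2 : ℝ) : ℂ) ≠ 0 :=
  Complex.ofReal_ne_zero.mpr (by positivity)

lemma norm_rotQuot_le {c : ℝ} (hc : 0 < c) (hA : AnalyticAt ℂ f z) (hs : c ≤ sphDeriv f z)
    (a : ℂ) : ‖rotQuot f a z‖ ≤ 1 / (2 * c) := by
  have hderiv := mul_one_add_sq_le_norm_deriv hA hs
  have hk : (0 : ℝ) < 1 + ‖a‖ ^ 2 := by positivity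
  rw [rotQuot, norm_div, norm_mul ((1 + ‖a‖ ^ 2 : ℝ) : ℂ), Complex.norm_of_nonneg hk.le]
  calc ‖(f z - a) * (1 + conj a * f z)‖ / ((1 + ‖a‖ ^ 2) * ‖deriv f z‖)
      ≤ (1 + ‖a‖ ^ 2) * (1 + ‖f z‖ ^ 2) / 2 / ((1 + ‖a‖ ^ 2) * (c * (1 + ‖f z‖ ^ 2))) :=
        div_le_div₀ (by positivity) (norm_sub_mul_one_add_conj_mul_le a (f z)) (by positivity)
          (mul_le_mul_of_nonneg_left hderiv hk.le)
    _ = 1 / (2 * c) := by field_simp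

lemma differentiableAt_rotQuot (hA : AnalyticAt ℂ f z) (hd : deriv f z ≠ 0) (a : ℂ) :
    DifferentiableAt ℂ (rotQuot f a) z :=
  ((hA.differentiableAt.sub_const a).mul
    ((hA.differentiableAt.const_mul (conj a)).const_add 1)).div
    (hA.deriv.differentiableAt.const_mul _) (mul_ne_zero (one_add_sq_norm_ne_zero a) hd)

lemma rotQuot_self : rotQuot f (f z) z = 0 := by
  rw [rotQuot, sub_self, zero_mul, zero_div]

lemma hasDerivAt_rotQuot_self (hA : AnalyticAt ℂ f z) (hd : deriv f z ≠ 0) :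
    HasDerivAt (rotQuot f (f z)) 1 z := by
  have hf := hA.differentiableAt.hasDerivAt
  have hq := ((hf.sub_const (f z)).mul ((hf.const_mul (conj (f z))).const_add 1)).div
    (hA.deriv.differentiableAt.hasDerivAt.const_mul ((1 + ‖f z‖ ^ 2 : ℝ) : ℂ))
    (mul_ne_zero (one_add_sq_norm_ne_zero (f z)) hd)
  have hk : 1 + conj (f z) * f z = ((1 + ‖f z‖ ^ 2 : ℝ) : ℂ) := by
    rw [mul_comm, Complex.mul_conj, Complex.normSq_eq_norm_sq]
    push_cast
    ring
  refine hq.congr_deriv ?_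
  simp only [Pi.mul_apply, sub_self, zero_mul, add_zero, sub_zero, hk]
  rw [div_eq_one_iff_eq (pow_ne_zero 2 (mul_ne_zero (one_add_sq_norm_ne_zero (f z)) hd))]
  ring

end RotQuot

lemma le_half_of_analyticAt_zero {c : ℝ} (hc : 0 < c) {f : ℂ → ℂ} (hf : MeroOnDisk f)
    (hge : ∀ z ∈ ball (0 : ℂ) 1, c ≤ sphDeriv f z) (h0 : AnalyticAt ℂ f 0) : c ≤ 1 / 2 := by
  set V := ball (0 : ℂ) 1 ∩ {z | AnalyticAt ℂ f z}
  have hV : IsOpen V := isOpen_ball.inter (isOpen_analyticAt ℂ f)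
  have hderiv : ∀ z ∈ V, deriv f z ≠ 0 := fun z hz =>
    deriv_ne_zero_of_sphDeriv_pos hz.2 (hc.trans_le (hge z hz.1))
  have hpoles : ∀ z ∈ ball (0 : ℂ) 1 \ V, ∀ᶠ w in 𝓝[≠] z, w ∈ V := by
    rintro z ⟨hz, hzV⟩
    have hA : ¬AnalyticAt ℂ f z := fun hA => hzV ⟨hz, hA⟩
    filter_upwards [isOpen_ball.mem_nhds hz |> mem_nhdsWithin_of_mem_nhds,
      eventually_analyticAt_of_inv ((hf z hz).resolve_left hA).1 hA] with w hw hAw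
    exact ⟨hw, hAw⟩
  obtain ⟨G, hGd, hGM, hGV⟩ := exists_differentiableOn_mapsTo_closedBall_eqOn hV
    (fun z hz => (differentiableAt_rotQuot hz.2 (hderiv z hz) (f 0)).differentiableWithinAt)
    (fun z hz => mem_closedBall_zero_iff.mpr (norm_rotQuot_le hc hz.2 (hge z hz.1) (f 0))) hpoles
  have h0V : (0 : ℂ) ∈ V := ⟨mem_ball_self one_pos, h0⟩
  have hG0 : G 0 = 0 := (hGV h0V).trans rotQuot_self
  have hG'0 : deriv G 0 = 1 := ((hasDerivAt_rotQuot_self h0 (hderiv 0 h0V)).congr_of_eventuallyEq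
    (hGV.eventuallyEq_of_mem (hV.mem_nhds h0V))).deriv
  have hSchwarz := Complex.norm_deriv_le_div_of_mapsTo_ball hGd (by rwa [hG0]) one_pos
  rw [hG'0, norm_one, div_one, le_div_iff₀ (by positivity)] at hSchwarz
  linarith

/-- If `f` is meromorphic on the unit disk with spherical derivative `≥ c > 0`
everywhere, then `c ≤ 1/2`. -/
theorem c_le_half (c : ℝ) (hc : 0 < c) (f : ℂ → ℂ) (hf : MeroOnDisk f)
    (hge : ∀ z ∈ ball (0 : ℂ) 1, c ≤ sphDeriv f z) :
    c ≤ 1 / 2 := by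
  rcases hf 0 (mem_ball_self one_pos) with h0 | ⟨hF0, -⟩
  · exact le_half_of_analyticAt_zero hc hf hge h0
  · refine le_half_of_analyticAt_zero hc hf.inv (fun z hz => ?_) hF0
    rw [sphDeriv_inv ((hf z hz).imp_right And.left) (hc.trans_le (hge z hz))]
    exact hge z hz
end

section
/- Let c > 0, let f be a meromorphic function on the open unit disk 𝔻 with f^♯(z) ≥ c for all z ∈ 𝔻 (i.e. f ∈ ℱ_c), and let z₀ ∈ 𝔻. Then f^♯(z₀) ≥ (1 − √(1 − 4c²(1 − |z₀|²)²))/(2c(1 − |z₀|²)²). -/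
open Complex Metric ComplexConjugate

/-! Rotating the Riemann sphere so that `f z₀` is sent to `0` (or applying `w ↦ 1/w` at a pole)
leaves `f^♯` unchanged and gives a function `g` with `g z₀ = 0`. Since `f^♯ ≥ c > 0` excludes
critical points and multiple poles, `A = 1/g'` and `B = g²/g'` are holomorphic on the whole disk,
with `|A| + |B| = 1/g^♯ ≤ 1/c`, and `B` has a double zero at `z₀` with leading coefficient
`g'(z₀)`. Moving `z₀` to the origin by a disk automorphism and applying the maximum principle
on circles of radius `ρ → 1` yields `1/x + (1 - |z₀|²)² x ≤ 1/c` for `x = f^♯(z₀)`; solving this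
quadratic inequality gives the bound. -/

open Filter Topology Set

lemma one_sub_sqrt_div_le_of_inv_add_mul_le {c t x : ℝ} (hc : 0 < c) (ht : 0 < t) (hx : 0 < x)
    (h : 1 / x + t * x ≤ 1 / c) : (1 - √(1 - 4 * c ^ 2 * t)) / (2 * c * t) ≤ x := by
  have hquad : c * t * x ^ 2 - x + c ≤ 0 := by
    have := mul_le_mul_of_nonneg_left h (mul_pos hc hx).le
    field_simp at this
    nlinarith
  have hsq : (1 - 2 * c * t * x) ^ 2 ≤ 1 - 4 * c ^ 2 * t := by nlinarith [mul_pos hc ht]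
  have := (le_abs_self _).trans (Real.abs_le_sqrt hsq)
  rw [div_le_iff₀ (by positivity)]
  linarith

section DiskShift

variable {z₀ w : ℂ}

noncomputable def diskShift (z₀ w : ℂ) : ℂ := (w + z₀) / (1 + conj z₀ * w)

lemma one_add_conj_mul_ne_zero (hz₀ : ‖z₀‖ ≤ 1) (hw : ‖w‖ < 1) : 1 + conj z₀ * w ≠ 0 := by
  intro h
  have : ‖conj z₀ * w‖ < 1 := by
    rw [norm_mul, Complex.norm_conj]
    nlinarith [norm_nonneg z₀, norm_nonneg w]
  rw [eq_neg_of_add_eq_zero_right h, norm_neg, norm_one] at this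
  exact this.false

lemma diskShift_zero : diskShift z₀ 0 = z₀ := by simp [diskShift]

lemma diskShift_sub (hz₀ : ‖z₀‖ ≤ 1) (hw : ‖w‖ < 1) :
    diskShift z₀ w - z₀ = w * (1 - conj z₀ * diskShift z₀ w) := by
  have hd := one_add_conj_mul_ne_zero hz₀ hw
  have := div_mul_cancel₀ (w + z₀) hd
  unfold diskShift
  linear_combination this

lemma mapsTo_diskShift (hz₀ : z₀ ∈ ball (0 : ℂ) 1) :
    MapsTo (diskShift z₀) (ball 0 1) (ball 0 1) := by
  intro w hw
  rw [mem_ball_zero_iff] at hz₀ hw ⊢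
  have hd := one_add_conj_mul_ne_zero hz₀.le hw
  have key : ‖1 + conj z₀ * w‖ ^ 2 - ‖w + z₀‖ ^ 2 = (1 - ‖z₀‖ ^ 2) * (1 - ‖w‖ ^ 2) := by
    simp only [Complex.sq_norm, Complex.normSq_apply, Complex.add_re, Complex.add_im,
      Complex.mul_re, Complex.mul_im, Complex.one_re, Complex.one_im, Complex.conj_re,
      Complex.conj_im]
    ring
  have hpos : 0 < (1 - ‖z₀‖ ^ 2) * (1 - ‖w‖ ^ 2) := by
    apply mul_pos <;> nlinarith [norm_nonneg z₀, norm_nonneg w]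
  rw [diskShift, norm_div, div_lt_one (norm_pos_iff.mpr hd)]
  nlinarith [norm_nonneg (w + z₀), norm_nonneg (1 + conj z₀ * w)]

lemma analyticOnNhd_diskShift (hz₀ : z₀ ∈ ball (0 : ℂ) 1) :
    AnalyticOnNhd ℂ (diskShift z₀) (ball 0 1) := fun _ hw =>
  (analyticAt_id.add analyticAt_const).div
    (analyticAt_const.add (analyticAt_const.mul analyticAt_id))
    (one_add_conj_mul_ne_zero (mem_ball_zero_iff.mp hz₀).le (mem_ball_zero_iff.mp hw))

end DiskShift

theorem Complex.norm_add_norm_le_of_forall_mem_frontier_norm_add_norm_le {E : Type*}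
    [NormedAddCommGroup E] [NormedSpace ℂ E] [Nontrivial E] {F G : E → ℂ} {U : Set E}
    (hU : Bornology.IsBounded U) (hF : DiffContOnCl ℂ F U) (hG : DiffContOnCl ℂ G U) {M : ℝ}
    (hM : ∀ z ∈ frontier U, ‖F z‖ + ‖G z‖ ≤ M) {z : E} (hz : z ∈ closure U) :
    ‖F z‖ + ‖G z‖ ≤ M := by
  obtain ⟨α, hα, hαF⟩ := Complex.exists_norm_eq_mul_self (F z)
  obtain ⟨β, hβ, hβG⟩ := Complex.exists_norm_eq_mul_self (G z)
  have := Complex.norm_le_of_forall_mem_frontier_norm_le (C := M) hU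
    ((hF.const_smul α).add (hG.const_smul β)) (fun ζ hζ => ?_) hz
  · simp only [Pi.add_apply, Pi.smul_apply, smul_eq_mul] at this
    rwa [← hαF, ← hβG, ← Complex.ofReal_add, Complex.norm_real,
      Real.norm_of_nonneg (by positivity)] at this
  · simp only [Pi.add_apply, Pi.smul_apply, smul_eq_mul]
    calc ‖α * F ζ + β * G ζ‖ ≤ ‖F ζ‖ + ‖G ζ‖ := by
          simpa [norm_mul, hα, hβ] using norm_add_le (α * F ζ) (β * G ζ)
      _ ≤ M := hM ζ hζ

theorem norm_add_sq_mul_norm_le {A C : ℂ → ℂ} {z₀ : ℂ} {M : ℝ}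
    (hA : AnalyticOnNhd ℂ A (ball 0 1)) (hC : AnalyticOnNhd ℂ C (ball 0 1))
    (hz₀ : z₀ ∈ ball (0 : ℂ) 1) (hM : ∀ z ∈ ball (0 : ℂ) 1, ‖A z‖ + ‖(z - z₀) ^ 2 * C z‖ ≤ M) :
    ‖A z₀‖ + (1 - ‖z₀‖ ^ 2) ^ 2 * ‖C z₀‖ ≤ M := by
  have hz₀le : ‖z₀‖ ≤ 1 := (mem_ball_zero_iff.mp hz₀).le
  set ψ : ℂ → ℂ := fun z => C z * (1 - conj z₀ * z) ^ 2
  have hψ : AnalyticOnNhd ℂ ψ (ball 0 1) := fun z hz =>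
    (hC z hz).mul ((analyticAt_const.sub (analyticAt_const.mul analyticAt_id)).pow 2)
  have hψz₀ : ‖ψ z₀‖ = (1 - ‖z₀‖ ^ 2) ^ 2 * ‖C z₀‖ := by
    have : (1 : ℂ) - conj z₀ * z₀ = ((1 - ‖z₀‖ ^ 2 : ℝ) : ℂ) := by
      rw [mul_comm, Complex.mul_conj, Complex.normSq_eq_norm_sq]; push_cast; ring
    rw [norm_mul, norm_pow, this, Complex.norm_real, Real.norm_eq_abs, sq_abs, mul_comm]
  -- Pulled back by `diskShift z₀`, `(z - z₀)²` becomes `w² (1 - z̄₀ z)²`, so on `|w| = ρ` the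
  -- second term is `ρ² |ψ|`; the maximum principle then gives the estimate at the centre.
  have hρ : ∀ ρ ∈ Ioo (0 : ℝ) 1, ‖A z₀‖ + ρ ^ 2 * ‖ψ z₀‖ ≤ M := by
    rintro ρ ⟨hρ0, hρ1⟩
    have hsub : closedBall (0 : ℂ) ρ ⊆ ball 0 1 := closedBall_subset_ball hρ1
    have hshift := analyticOnNhd_diskShift hz₀
    have hF : DiffContOnCl ℂ (A ∘ diskShift z₀) (ball 0 ρ) :=
      ((hA.comp hshift (mapsTo_diskShift hz₀)).differentiableOn).diffContOnCl_ball hsub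
    have hG : DiffContOnCl ℂ ((ρ : ℂ) ^ 2 • (ψ ∘ diskShift z₀)) (ball 0 ρ) :=
      (((hψ.comp hshift (mapsTo_diskShift hz₀)).differentiableOn).diffContOnCl_ball
        hsub).const_smul _
    have := Complex.norm_add_norm_le_of_forall_mem_frontier_norm_add_norm_le (M := M)
      isBounded_ball hF hG (fun w hw => ?_) (subset_closure (mem_ball_self hρ0))
    · simpa [diskShift_zero, norm_mul, ← Complex.ofReal_pow, abs_of_pos hρ0] using this
    · rw [frontier_ball 0 hρ0.ne', mem_sphere_zero_iff_norm] at hw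
      have hw1 : w ∈ ball (0 : ℂ) 1 := mem_ball_zero_iff.mpr (hw ▸ hρ1)
      refine le_trans (le_of_eq ?_) (hM _ (mapsTo_diskShift hz₀ hw1))
      rw [diskShift_sub hz₀le (mem_ball_zero_iff.mp hw1)]
      simp only [Pi.smul_apply, Function.comp_apply, smul_eq_mul, ψ, norm_mul, norm_pow, hw,
        Complex.norm_real, Real.norm_eq_abs, abs_of_pos hρ0]
      ring
  have hlim : Tendsto (fun ρ : ℝ => ‖A z₀‖ + ρ ^ 2 * ‖ψ z₀‖) (𝓝[<] 1)
      (𝓝 (‖A z₀‖ + 1 ^ 2 * ‖ψ z₀‖)) :=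
    ((continuous_const.add ((continuous_pow 2).mul continuous_const)).tendsto 1).mono_left
      nhdsWithin_le_nhds
  have := le_of_tendsto hlim (mem_of_superset (Ioo_mem_nhdsLT one_pos) hρ)
  rwa [one_pow, one_mul, hψz₀] at this

lemma exists_analyticOnNhd_eq_sq_mul {U : Set ℂ} {B h u : ℂ → ℂ} {z₀ : ℂ}
    (hB : AnalyticOnNhd ℂ B U) (hh : AnalyticAt ℂ h z₀) (hh0 : h z₀ = 0) (hu : AnalyticAt ℂ u z₀)
    (hBhu : B =ᶠ[𝓝 z₀] fun z => h z ^ 2 * u z) :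
    ∃ C : ℂ → ℂ, AnalyticOnNhd ℂ C U ∧ (∀ z ∈ U, B z = (z - z₀) ^ 2 * C z) ∧
      C z₀ = deriv h z₀ ^ 2 * u z₀ := by
  set D : ℂ → ℂ := fun z => dslope h z₀ z ^ 2 * u z
  have hD : AnalyticAt ℂ D z₀ := by
    obtain ⟨p, hp⟩ := hh
    have hslope : AnalyticAt ℂ (dslope h z₀) z₀ := ⟨_, hp.has_fpower_series_dslope_fslope⟩
    exact (hslope.pow 2).mul hu
  have hBD : B =ᶠ[𝓝 z₀] fun z => (z - z₀) ^ 2 * D z := by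
    filter_upwards [hBhu] with z hz
    rw [hz, ← sub_zero (h z), ← hh0, ← sub_smul_dslope, smul_eq_mul]
    ring
  set C := Function.update (fun z => B z / (z - z₀) ^ 2) z₀ (D z₀)
  have hCD : C =ᶠ[𝓝 z₀] D := by
    refine eventuallyEq_nhds_of_eventuallyEq_nhdsNE ?_ (by simp [C])
    filter_upwards [nhdsWithin_le_nhds hBD, self_mem_nhdsWithin] with z hz hne
    simp only [C, Function.update_of_ne hne]
    rw [hz, mul_div_cancel_left₀ _ (pow_ne_zero 2 (sub_ne_zero.2 hne))]
  refine ⟨C, fun z hz => ?_, fun z hz => ?_, by simp [C, D, dslope_same]⟩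
  · rcases eq_or_ne z z₀ with rfl | hne
    · exact hD.congr hCD.symm
    · refine ((hB z hz).div ((analyticAt_id.sub analyticAt_const).pow 2)
        (pow_ne_zero 2 (sub_ne_zero.2 hne))).congr ?_
      filter_upwards [eventually_ne_nhds hne] with ζ hζ
      exact (Function.update_of_ne hζ _ _).symm
  · rcases eq_or_ne z z₀ with rfl | hne
    · simp [hBD.self_of_nhds]
    · simp only [C, Function.update_of_ne hne]
      rw [mul_div_cancel₀ _ (pow_ne_zero 2 (sub_ne_zero.2 hne))]

section Meromorphic

variable {f : ℂ → ℂ}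

lemma locUnivOnDisk_of_le_sphDeriv {c : ℝ} (hc : 0 < c)
    (hge : ∀ z ∈ ball (0 : ℂ) 1, c ≤ sphDeriv f z) : LocUnivOnDisk f := by
  intro z hz
  have h := hc.trans_le (hge z hz)
  unfold sphDeriv at h
  constructor
  · intro ha hd
    rw [if_pos ha, hd] at h
    simp at h
  · intro hn hd
    rw [if_neg hn, hd] at h
    simp at h

lemma eventually_analyticAt_and_ne_zero {z : ℂ} (hg : AnalyticAt ℂ (fun w => (f w)⁻¹) z)
    (hd : deriv (fun w => (f w)⁻¹) z ≠ 0) : ∀ᶠ ζ in 𝓝[≠] z, AnalyticAt ℂ f ζ ∧ f ζ ≠ 0 := by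
  have hne : ∀ᶠ ζ in 𝓝[≠] z, (f ζ)⁻¹ ≠ 0 :=
    hg.eventually_eq_zero_or_eventually_ne_zero.resolve_left fun h => hd <| by
      rw [Filter.EventuallyEq.deriv_eq (h : (fun w => (f w)⁻¹) =ᶠ[𝓝 z] fun _ => 0), deriv_const]
  filter_upwards [hne, nhdsWithin_le_nhds hg.eventually_analyticAt] with ζ h0 hζ
  have hinv : AnalyticAt ℂ (fun w => ((f w)⁻¹)⁻¹) ζ := hζ.inv h0
  exact ⟨by simpa only [inv_inv] using hinv, by simpa using h0⟩

lemma neg_sq_div_deriv_inv_eq {z : ℂ} (hfz : AnalyticAt ℂ f z) (hf0 : f z ≠ 0) (a b : ℂ) :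
    -(a + b * (f z)⁻¹) ^ 2 / deriv (fun w => (f w)⁻¹) z = (a * f z + b) ^ 2 / deriv f z := by
  rw [show (fun w => (f w)⁻¹) = f⁻¹ from rfl, deriv_inv'' hfz.differentiableAt hf0]
  rcases eq_or_ne (deriv f z) 0 with hd | hd
  · simp [hd]
  · field_simp

open scoped Classical in
/-- `(a f + b)² / f'`, computed in the chart `1 / f` at the poles of `f`. Up to the factor
`-(‖a‖² + ‖b‖²)` it is `1 / (T ∘ f)'` for the rotation `T w = (ā - b̄ w) / (a w + b)` of the
Riemann sphere. -/
noncomputable def sqAffDivDeriv (f : ℂ → ℂ) (a b z : ℂ) : ℂ :=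
  if AnalyticAt ℂ f z then (a * f z + b) ^ 2 / deriv f z
  else -(a + b * (f z)⁻¹) ^ 2 / deriv (fun w => (f w)⁻¹) z

variable {a b z : ℂ}

lemma sqAffDivDeriv_eventuallyEq_of_analyticAt (hfz : AnalyticAt ℂ f z) :
    sqAffDivDeriv f a b =ᶠ[𝓝 z] fun ζ => (a * f ζ + b) ^ 2 / deriv f ζ := by
  filter_upwards [hfz.eventually_analyticAt] with ζ hζ
  rw [sqAffDivDeriv, if_pos hζ]

lemma sqAffDivDeriv_eventuallyEq_of_not_analyticAt (hfz : ¬AnalyticAt ℂ f z)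
    (hg : AnalyticAt ℂ (fun w => (f w)⁻¹) z) (hd : deriv (fun w => (f w)⁻¹) z ≠ 0) :
    sqAffDivDeriv f a b =ᶠ[𝓝 z] fun ζ => -(a + b * (f ζ)⁻¹) ^ 2 / deriv (fun w => (f w)⁻¹) ζ := by
  refine eventuallyEq_nhds_of_eventuallyEq_nhdsNE ?_ (by rw [sqAffDivDeriv, if_neg hfz])
  filter_upwards [eventually_analyticAt_and_ne_zero hg hd] with ζ ⟨hζ, h0⟩
  rw [sqAffDivDeriv, if_pos hζ, neg_sq_div_deriv_inv_eq hζ h0]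

lemma analyticOnNhd_sqAffDivDeriv (hf : MeroOnDisk f) (hloc : LocUnivOnDisk f) (a b : ℂ) :
    AnalyticOnNhd ℂ (sqAffDivDeriv f a b) (ball 0 1) := by
  intro z hz
  by_cases hfz : AnalyticAt ℂ f z
  · refine AnalyticAt.congr ?_ (sqAffDivDeriv_eventuallyEq_of_analyticAt hfz).symm
    exact (((analyticAt_const.mul hfz).add analyticAt_const).pow 2).div hfz.deriv
      ((hloc z hz).1 hfz)
  · obtain ⟨hg, -⟩ := (hf z hz).resolve_left hfz
    have hd := (hloc z hz).2 hfz
    refine AnalyticAt.congr ?_ (sqAffDivDeriv_eventuallyEq_of_not_analyticAt hfz hg hd).symm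
    exact ((analyticAt_const.add (analyticAt_const.mul hg)).pow 2).neg.div hg.deriv hd

lemma norm_sq_div_add_norm_sq_div (a b w d : ℂ) :
    ‖(a * w + b) ^ 2 / d‖ + ‖(-conj b * w + conj a) ^ 2 / d‖ =
      (‖a‖ ^ 2 + ‖b‖ ^ 2) * (1 + ‖w‖ ^ 2) / ‖d‖ := by
  rw [norm_div, norm_div, norm_pow, norm_pow, ← add_div]
  congr 1
  simp only [Complex.sq_norm, Complex.normSq_apply, Complex.add_re, Complex.add_im,
    Complex.mul_re, Complex.mul_im, Complex.neg_re, Complex.neg_im, Complex.conj_re,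
    Complex.conj_im]
  ring

lemma norm_sqAffDivDeriv_add (f : ℂ → ℂ) (a b z : ℂ) :
    ‖sqAffDivDeriv f a b z‖ + ‖sqAffDivDeriv f (-conj b) (conj a) z‖ =
      (‖a‖ ^ 2 + ‖b‖ ^ 2) / sphDeriv f z := by
  unfold sqAffDivDeriv sphDeriv
  split_ifs
  · rw [norm_sq_div_add_norm_sq_div, div_div_eq_mul_div]
  · have e₁ : (a + b * (f z)⁻¹) ^ 2 = (b * (f z)⁻¹ + a) ^ 2 := by ring
    have e₂ : (-conj b + conj a * (f z)⁻¹) ^ 2 = (-conj a * (f z)⁻¹ + conj b) ^ 2 := by ring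
    rw [neg_div, neg_div, norm_neg, norm_neg, e₁, e₂, norm_sq_div_add_norm_sq_div,
      div_div_eq_mul_div, add_comm (‖b‖ ^ 2)]

lemma exists_sqAffDivDeriv_eq_sq_mul (hf : MeroOnDisk f) (hloc : LocUnivOnDisk f) {z₀ : ℂ}
    (hz₀ : z₀ ∈ ball (0 : ℂ) 1) :
    ∃ a b : ℂ, ∃ C : ℂ → ℂ, 0 < ‖a‖ ^ 2 + ‖b‖ ^ 2 ∧ AnalyticOnNhd ℂ C (ball 0 1) ∧
      (∀ z ∈ ball (0 : ℂ) 1, sqAffDivDeriv f a b z = (z - z₀) ^ 2 * C z) ∧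
      ‖C z₀‖ = (‖a‖ ^ 2 + ‖b‖ ^ 2) * sphDeriv f z₀ := by
  have hB := analyticOnNhd_sqAffDivDeriv hf hloc
  by_cases hfz : AnalyticAt ℂ f z₀
  · have hd := (hloc z₀ hz₀).1 hfz
    have hBhu : sqAffDivDeriv f 1 (-f z₀) =ᶠ[𝓝 z₀]
        fun z => (f z - f z₀) ^ 2 * (deriv f z)⁻¹ := by
      filter_upwards [sqAffDivDeriv_eventuallyEq_of_analyticAt hfz] with z hz
      rw [hz, one_mul, ← sub_eq_add_neg, div_eq_mul_inv]
    obtain ⟨C, hC, hBC, hCz₀⟩ := exists_analyticOnNhd_eq_sq_mul (hB 1 (-f z₀))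
      (h := fun z => f z - f z₀) (u := fun z => (deriv f z)⁻¹) (hfz.sub analyticAt_const)
      (sub_self _) (hfz.deriv.inv hd) hBhu
    refine ⟨1, -f z₀, C, add_pos_of_pos_of_nonneg (by simp) (by positivity), hC, hBC, ?_⟩
    rw [hCz₀, deriv_sub_const, sphDeriv, if_pos hfz]
    simp only [norm_mul, norm_pow, norm_inv, norm_one, one_pow, norm_neg]
    field_simp
  · obtain ⟨hg, hg0⟩ := (hf z₀ hz₀).resolve_left hfz
    have hd := (hloc z₀ hz₀).2 hfz
    have hBhu : sqAffDivDeriv f 0 1 =ᶠ[𝓝 z₀]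
        fun z => (f z)⁻¹ ^ 2 * -(deriv (fun w => (f w)⁻¹) z)⁻¹ := by
      filter_upwards [sqAffDivDeriv_eventuallyEq_of_not_analyticAt hfz hg hd] with z hz
      rw [hz]
      ring
    obtain ⟨C, hC, hBC, hCz₀⟩ := exists_analyticOnNhd_eq_sq_mul (hB 0 1)
      (u := fun z => -(deriv (fun w => (f w)⁻¹) z)⁻¹) hg hg0 (hg.deriv.inv hd).neg hBhu
    refine ⟨0, 1, C, by simp, hC, hBC, ?_⟩
    rw [hCz₀, sphDeriv, if_neg hfz, hg0]
    simp only [norm_mul, norm_pow, norm_inv, norm_neg, norm_zero, norm_one]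
    field_simp
    ring

end Meromorphic

/-- Lower bound for the spherical derivative of `f ∈ ℱ_c` at any point of the disk. -/
theorem sphDeriv_lower (c : ℝ) (hc : 0 < c) (f : ℂ → ℂ) (hf : MeroOnDisk f)
    (hge : ∀ z ∈ ball (0 : ℂ) 1, c ≤ sphDeriv f z) (z₀ : ℂ) (hz₀ : z₀ ∈ ball (0 : ℂ) 1) :
    (1 - Real.sqrt (1 - 4 * c ^ 2 * (1 - ‖z₀‖ ^ 2) ^ 2)) /
        (2 * c * (1 - ‖z₀‖ ^ 2) ^ 2) ≤ sphDeriv f z₀ := by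
  have hloc := locUnivOnDisk_of_le_sphDeriv hc hge
  have hx : 0 < sphDeriv f z₀ := hc.trans_le (hge z₀ hz₀)
  have hs : 0 < 1 - ‖z₀‖ ^ 2 := by
    nlinarith [norm_nonneg z₀, mem_ball_zero_iff.mp hz₀]
  obtain ⟨a, b, C, hk, hC, hBC, hCz₀⟩ := exists_sqAffDivDeriv_eq_sq_mul hf hloc hz₀
  set k := ‖a‖ ^ 2 + ‖b‖ ^ 2
  set A := sqAffDivDeriv f (-conj b) (conj a)
  have hbound : ∀ z ∈ ball (0 : ℂ) 1, ‖A z‖ + ‖(z - z₀) ^ 2 * C z‖ ≤ k / c := by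
    intro z hz
    rw [← hBC z hz, add_comm, norm_sqAffDivDeriv_add]
    exact div_le_div_of_nonneg_left hk.le hc (hge z hz)
  have hA₀ : ‖A z₀‖ = k / sphDeriv f z₀ := by
    simpa [hBC z₀ hz₀] using norm_sqAffDivDeriv_add f a b z₀
  have key := norm_add_sq_mul_norm_le (analyticOnNhd_sqAffDivDeriv hf hloc _ _) hC hz₀ hbound
  rw [hA₀, hCz₀] at key
  refine one_sub_sqrt_div_le_of_inv_add_mul_le hc (pow_pos hs 2) hx (le_of_mul_le_mul_left ?_ hk)
  calc _ = k / sphDeriv f z₀ + (1 - ‖z₀‖ ^ 2) ^ 2 * (k * sphDeriv f z₀) := by ring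
    _ ≤ k / c := key
    _ = _ := by ring
end

section
/- Let z₀ ∈ 𝔻 with z₀ ≠ 0, and let w : 𝔻 → 𝔻 be a holomorphic function (mapping the open unit disk into itself) such that w(z₀) = 0 and w''(z₀) = 0. Then |w'(z₀)| ≤ (√(4 + |z₀|²) − |z₀|)/(2(1 − |z₀|²)). -/
open Complex Metric ComplexConjugate

/-!
Move `z₀` to the origin with the disk automorphism `φ(z) = (z + z₀)/(1 + z̄₀ z)`. Then
`f = w ∘ φ` is a self-map of the disk with `f(0) = 0`, `f'(0) = w'(z₀)(1 - |z₀|²)` and, because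
`w''(z₀) = 0`, `f''(0) = w'(z₀) φ''(0) = -2 z̄₀ (1 - |z₀|²) w'(z₀)`. Schwarz–Pick applied to
`g(z) = f(z)/z` gives `|f''(0)|/2 = |g'(0)| ≤ 1 - |g(0)|² = 1 - |f'(0)|²`, i.e. `x² + |z₀| x ≤ 1`
for `x = |w'(z₀)|(1 - |z₀|²)`; solving this quadratic inequality gives the bound.
-/

theorem le_of_sq_add_mul_le_one {x r : ℝ} (h : x ^ 2 + r * x ≤ 1) :
    x ≤ (Real.sqrt (4 + r ^ 2) - r) / 2 := by
  have hs := Real.sq_sqrt (by positivity : (0 : ℝ) ≤ 4 + r ^ 2)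
  nlinarith [Real.sqrt_nonneg (4 + r ^ 2)]

section SecondDerivative

variable {𝕜 : Type*} [NontriviallyNormedField 𝕜] [CompleteSpace 𝕜]

theorem deriv_deriv_comp {w φ : 𝕜 → 𝕜} {x : 𝕜} (hw : AnalyticAt 𝕜 w (φ x))
    (hφ : AnalyticAt 𝕜 φ x) :
    deriv (deriv (w ∘ φ)) x =
      deriv (deriv w) (φ x) * deriv φ x ^ 2 + deriv w (φ x) * deriv (deriv φ) x := by
  have hchain : deriv (w ∘ φ) =ᶠ[nhds x] fun y => deriv w (φ y) * deriv φ y := by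
    filter_upwards [hφ.continuousAt.eventually hw.eventually_analyticAt,
      hφ.eventually_analyticAt] with y hwy hφy
    exact deriv_comp y hwy.differentiableAt hφy.differentiableAt
  have hw' : HasDerivAt (fun y => deriv w (φ y)) (deriv (deriv w) (φ x) * deriv φ x) x :=
    hw.deriv.differentiableAt.hasDerivAt.comp x hφ.differentiableAt.hasDerivAt
  rw [hchain.deriv_eq, (hw'.fun_mul hφ.deriv.differentiableAt.hasDerivAt).deriv]
  ring

theorem deriv_dslope_same [CharZero 𝕜] {f : 𝕜 → 𝕜} {a : 𝕜} (hf : AnalyticAt 𝕜 f a) :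
    deriv (dslope f a) a = deriv (deriv f) a / 2 := by
  rw [hf.hasFPowerSeriesAt.has_fpower_series_dslope_fslope.deriv]
  simp [FormalMultilinearSeries.apply_eq_prod_smul_coeff, FormalMultilinearSeries.coeff_fslope,
    iteratedDeriv_succ]

end SecondDerivative

noncomputable def diskMobius (a z : ℂ) : ℂ := (z + a) / (1 + conj a * z)

namespace diskMobius

theorem normSq_den_sub_normSq_num (a z : ℂ) :
    normSq (1 + conj a * z) - normSq (z + a) = (1 - normSq a) * (1 - normSq z) := by
  simp only [normSq_apply, add_re, add_im, mul_re, mul_im, conj_re, conj_im, one_re, one_im]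
  ring

theorem norm_lt_one {a z : ℂ} (ha : ‖a‖ < 1) (hz : ‖z‖ < 1) : ‖diskMobius a z‖ < 1 := by
  have key := normSq_den_sub_normSq_num a z
  simp only [← Complex.sq_norm] at key
  have hlt : ‖z + a‖ < ‖1 + conj a * z‖ := by
    have : 0 < (1 - ‖a‖ ^ 2) * (1 - ‖z‖ ^ 2) := by
      apply mul_pos <;> nlinarith [norm_nonneg a, norm_nonneg z]
    nlinarith [norm_nonneg (z + a), norm_nonneg (1 + conj a * z)]
  rw [diskMobius, norm_div]
  exact (div_lt_one ((norm_nonneg _).trans_lt hlt)).2 hlt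

/-- For `‖a‖ = ‖z‖ = 1` the denominator can vanish; the junk value `0` still obeys the bound. -/
theorem norm_le_one {a z : ℂ} (ha : ‖a‖ ≤ 1) (hz : ‖z‖ ≤ 1) : ‖diskMobius a z‖ ≤ 1 := by
  have key := normSq_den_sub_normSq_num a z
  simp only [← Complex.sq_norm] at key
  have hle : ‖z + a‖ ≤ ‖1 + conj a * z‖ := by
    have : 0 ≤ (1 - ‖a‖ ^ 2) * (1 - ‖z‖ ^ 2) := by
      apply mul_nonneg <;> nlinarith [norm_nonneg a, norm_nonneg z]
    nlinarith [norm_nonneg (z + a), norm_nonneg (1 + conj a * z)]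
  rw [diskMobius, norm_div]
  exact div_le_one_of_le₀ hle (norm_nonneg _)

theorem mapsTo_ball {a : ℂ} (ha : ‖a‖ < 1) :
    Set.MapsTo (diskMobius a) (ball 0 1) (ball 0 1) := fun _ hz =>
  mem_ball_zero_iff.2 (norm_lt_one ha (mem_ball_zero_iff.1 hz))

theorem one_sub_conj_mul_self (a : ℂ) : 1 - conj a * a = ((1 - ‖a‖ ^ 2 : ℝ) : ℂ) := by
  rw [conj_mul']
  push_cast
  ring

theorem hasDerivAt {a z : ℂ} (h : 1 + conj a * z ≠ 0) :
    HasDerivAt (diskMobius a) ((1 - ‖a‖ ^ 2 : ℝ) / (1 + conj a * z) ^ 2) z := by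
  have hnum : HasDerivAt (fun z : ℂ => z + a) 1 z := (hasDerivAt_id z).add_const a
  have hden : HasDerivAt (fun z : ℂ => 1 + conj a * z) (conj a) z := by
    simpa using ((hasDerivAt_id z).const_mul (conj a)).const_add 1
  refine (hnum.fun_div hden h).congr_deriv ?_
  rw [← one_sub_conj_mul_self]
  ring

theorem den_ne_zero {a z : ℂ} (ha : ‖a‖ < 1) (hz : ‖z‖ ≤ 1) : 1 + conj a * z ≠ 0 := by
  intro h
  have : ‖conj a * z‖ < 1 := by
    rw [norm_mul, norm_conj]
    nlinarith [norm_nonneg a, norm_nonneg z]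
  rw [eq_neg_of_add_eq_zero_right h, norm_neg, norm_one] at this
  exact lt_irrefl _ this

theorem differentiableAt {a z : ℂ} (ha : ‖a‖ < 1) (hz : ‖z‖ ≤ 1) :
    DifferentiableAt ℂ (diskMobius a) z :=
  (hasDerivAt (den_ne_zero ha hz)).differentiableAt

theorem analyticAt_zero (a : ℂ) : AnalyticAt ℂ (diskMobius a) 0 := by
  unfold diskMobius
  fun_prop (disch := simp)

theorem deriv_zero (a : ℂ) : deriv (diskMobius a) 0 = (1 - ‖a‖ ^ 2 : ℝ) := by
  simpa using (hasDerivAt (a := a) (z := 0) (by simp)).deriv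

theorem deriv_deriv_zero (a : ℂ) :
    deriv (deriv (diskMobius a)) 0 = -2 * conj a * (1 - ‖a‖ ^ 2 : ℝ) := by
  have hden : ∀ᶠ z in nhds (0 : ℂ), 1 + conj a * z ≠ 0 :=
    (show ContinuousAt (fun z : ℂ => 1 + conj a * z) 0 by fun_prop).eventually_ne (by simp)
  have hderiv : deriv (diskMobius a) =ᶠ[nhds 0]
      fun z => ((1 - ‖a‖ ^ 2 : ℝ) : ℂ) / (1 + conj a * z) ^ 2 := by
    filter_upwards [hden] with z hz
    exact (hasDerivAt hz).deriv
  have hsq : HasDerivAt (fun z : ℂ => (1 + conj a * z) ^ 2) (2 * conj a) 0 := by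
    simpa using (((hasDerivAt_id (0 : ℂ)).const_mul (conj a)).const_add 1).fun_pow 2
  rw [hderiv.deriv_eq, ((hasDerivAt_const 0 _).fun_div hsq (by simp)).deriv]
  simp only [mul_zero, add_zero, one_pow, div_one]
  ring

theorem hasDerivAt_neg_self {c : ℂ} (hc : ‖c‖ < 1) :
    HasDerivAt (diskMobius (-c)) ((1 - ‖c‖ ^ 2 : ℝ) : ℂ)⁻¹ c := by
  have hs : ((1 - ‖c‖ ^ 2 : ℝ) : ℂ) ≠ 0 := by
    norm_cast
    nlinarith [norm_nonneg c]
  have hden : 1 + conj (-c) * c = ((1 - ‖c‖ ^ 2 : ℝ) : ℂ) := by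
    rw [← one_sub_conj_mul_self, map_neg, neg_mul, ← sub_eq_add_neg]
  convert hasDerivAt (a := -c) (z := c) (hden ▸ hs) using 1
  rw [hden, norm_neg]
  field_simp

end diskMobius

/-- The Schwarz–Pick inequality at the origin, for maps into the closed disk. -/
theorem norm_deriv_le_one_sub_sq_of_mapsTo_ball {g : ℂ → ℂ}
    (hd : DifferentiableOn ℂ g (ball 0 1)) (hmaps : Set.MapsTo g (ball 0 1) (closedBall 0 1)) :
    ‖deriv g 0‖ ≤ 1 - ‖g 0‖ ^ 2 := by
  have hball : ball (0 : ℂ) 1 ∈ nhds 0 := isOpen_ball.mem_nhds (mem_ball_self one_pos)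
  have hc : ‖g 0‖ ≤ 1 := by simpa using hmaps (mem_ball_self one_pos)
  rcases hc.eq_or_lt with hc | hc
  · have hmax : IsLocalMax (norm ∘ g) 0 :=
      Filter.mem_of_superset hball fun z hz => by simpa [hc] using hmaps hz
    have hconst : g =ᶠ[nhds 0] fun _ => g 0 := Complex.eventually_eq_of_isLocalMax_norm
      (Filter.mem_of_superset hball fun z hz => hd.differentiableAt (isOpen_ball.mem_nhds hz)) hmax
    rw [hconst.deriv_eq, deriv_const, hc]
    norm_num
  · set h := diskMobius (-g 0) ∘ g
    have hd_h : DifferentiableOn ℂ h (ball 0 1) := fun z hz =>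
      ((diskMobius.differentiableAt (by simpa using hc) (mem_closedBall_zero_iff.1 (hmaps hz))).comp
        z (hd.differentiableAt (isOpen_ball.mem_nhds hz))).differentiableWithinAt
    have hmaps_h : Set.MapsTo h (ball 0 1) (closedBall (h 0) 1) := by
      rw [show h 0 = 0 by simp [h, diskMobius]]
      exact fun z hz => mem_closedBall_zero_iff.2
        (diskMobius.norm_le_one (by simpa using hc.le) (mem_closedBall_zero_iff.1 (hmaps hz)))
    have hschwarz : ‖deriv h 0‖ ≤ 1 := by
      simpa using Complex.norm_deriv_le_div_of_mapsTo_ball hd_h hmaps_h one_pos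
    have hs : 0 < 1 - ‖g 0‖ ^ 2 := by nlinarith [norm_nonneg (g 0)]
    have hderiv : deriv h 0 = ((1 - ‖g 0‖ ^ 2 : ℝ) : ℂ)⁻¹ * deriv g 0 :=
      ((diskMobius.hasDerivAt_neg_self hc).comp 0 (hd.differentiableAt hball).hasDerivAt).deriv
    rwa [hderiv, norm_mul, norm_inv, norm_real, Real.norm_of_nonneg hs.le, inv_mul_le_iff₀ hs,
      mul_one] at hschwarz

/-- Schwarz–Pick applied to `f(z)/z`. -/
theorem norm_deriv_deriv_le_of_mapsTo_ball {f : ℂ → ℂ} (hd : DifferentiableOn ℂ f (ball 0 1))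
    (hmaps : Set.MapsTo f (ball 0 1) (ball 0 1)) (h0 : f 0 = 0) :
    ‖deriv (deriv f) 0‖ ≤ 2 * (1 - ‖deriv f 0‖ ^ 2) := by
  have hball : ball (0 : ℂ) 1 ∈ nhds 0 := isOpen_ball.mem_nhds (mem_ball_self one_pos)
  have hmaps' : Set.MapsTo f (ball 0 1) (closedBall (f 0) 1) := by
    rw [h0]
    exact hmaps.mono_right ball_subset_closedBall
  have hslope : Set.MapsTo (dslope f 0) (ball 0 1) (closedBall 0 1) := fun z hz => by
    simpa using Complex.norm_dslope_le_div_of_mapsTo_ball hd hmaps' hz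
  have key := norm_deriv_le_one_sub_sq_of_mapsTo_ball ((differentiableOn_dslope hball).2 hd) hslope
  rw [dslope_same, deriv_dslope_same (hd.analyticAt hball), norm_div, RCLike.norm_ofNat] at key
  linarith

theorem schwarz_pick_refined_general (z₀ : ℂ) (hz₀ : z₀ ∈ ball (0 : ℂ) 1)
    (w : ℂ → ℂ) (hw : DifferentiableOn ℂ w (ball (0 : ℂ) 1))
    (hmaps : Set.MapsTo w (ball (0 : ℂ) 1) (ball (0 : ℂ) 1))
    (hw0 : w z₀ = 0) (hw'' : deriv (deriv w) z₀ = 0) :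
    ‖deriv w z₀‖ ≤
      (Real.sqrt (4 + ‖z₀‖ ^ 2) - ‖z₀‖) /
        (2 * (1 - ‖z₀‖ ^ 2)) := by
  have hR : ‖z₀‖ < 1 := mem_ball_zero_iff.1 hz₀
  have hs : 0 < 1 - ‖z₀‖ ^ 2 := by nlinarith [norm_nonneg z₀]
  set φ := diskMobius z₀
  have hφ0 : φ 0 = z₀ := by simp [φ, diskMobius]
  have hw_an : AnalyticAt ℂ w (φ 0) := hφ0 ▸ hw.analyticAt (isOpen_ball.mem_nhds hz₀)
  have hf : DifferentiableOn ℂ (w ∘ φ) (ball 0 1) :=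
    hw.comp (fun _ hz =>
      (diskMobius.differentiableAt hR (mem_ball_zero_iff.1 hz).le).differentiableWithinAt)
      (diskMobius.mapsTo_ball hR)
  have hf' : deriv (w ∘ φ) 0 = deriv w z₀ * (1 - ‖z₀‖ ^ 2 : ℝ) := by
    rw [deriv_comp 0 hw_an.differentiableAt (diskMobius.analyticAt_zero z₀).differentiableAt,
      diskMobius.deriv_zero, hφ0]
  have hf'' : deriv (deriv (w ∘ φ)) 0 = -2 * (deriv w z₀ * conj z₀ * (1 - ‖z₀‖ ^ 2 : ℝ)) := by
    rw [deriv_deriv_comp hw_an (diskMobius.analyticAt_zero z₀), hφ0, hw'',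
      diskMobius.deriv_deriv_zero]
    ring
  have key := norm_deriv_deriv_le_of_mapsTo_ball hf (hmaps.comp (diskMobius.mapsTo_ball hR))
    (by rw [Function.comp_apply, hφ0, hw0])
  rw [hf', hf'', norm_mul, norm_neg, norm_ofNat, norm_mul, norm_mul, norm_mul, norm_conj,
    norm_real, Real.norm_of_nonneg hs.le] at key
  have hx := le_of_sq_add_mul_le_one (x := ‖deriv w z₀‖ * (1 - ‖z₀‖ ^ 2)) (r := ‖z₀‖)
    (by linarith)
  rw [le_div_iff₀ (by positivity)]
  linarith

/-- A Schwarz–Pick type lemma: if `w : 𝔻 → 𝔻` is holomorphic with `w(z₀) = 0` and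
`w''(z₀) = 0` for some `z₀ ≠ 0`, then `|w'(z₀)| ≤ (√(4+|z₀|²) - |z₀|)/(2(1-|z₀|²))`. -/
theorem schwarz_pick_refined (z₀ : ℂ) (hz₀ : z₀ ∈ ball (0 : ℂ) 1) (hz₀0 : z₀ ≠ 0)
    (w : ℂ → ℂ) (hw : DifferentiableOn ℂ w (ball (0 : ℂ) 1))
    (hmaps : Set.MapsTo w (ball (0 : ℂ) 1) (ball (0 : ℂ) 1))
    (hw0 : w z₀ = 0) (hw'' : deriv (deriv w) z₀ = 0) :
    ‖deriv w z₀‖ ≤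
      (Real.sqrt (4 + ‖z₀‖ ^ 2) - ‖z₀‖) /
        (2 * (1 - ‖z₀‖ ^ 2)) :=
  schwarz_pick_refined_general z₀ hz₀ w hw hmaps hw0 hw''
end

section
/- Let z₀ ∈ 𝔻 with z₀ ≠ 0, and let w : 𝔻 → 𝔻 be a holomorphic function such that w(z₀) = 0, w''(z₀) = 0, and |w'(z₀)| = (√(4 + |z₀|²) − |z₀|)/(2(1 − |z₀|²)). Then w is a Blaschke product of degree 2: there exist λ ∈ ℂ with |λ| = 1 and p ∈ 𝔻 such that w(z) = λ · ((z − z₀)/(1 − z̄₀z)) · ((z − p)/(1 − p̄z)) for all z ∈ 𝔻. -/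
/-!
Move `z₀` to the origin: `W = w ∘ blaschkeFactor (-z₀)` vanishes at `0`, so by the Schwarz lemma
`g = W / z` maps the disk into the closed disk, with `g 0 = (1 - ‖z₀‖²) w'(z₀)` and, since
`w''(z₀) = 0`, `g'(0) = -z̄₀ g(0)`. The prescribed `‖w'(z₀)‖` makes `‖g 0‖` the positive root `a`
of `a² + ‖z₀‖ a = 1`, that is `‖g'(0)‖ = 1 - ‖g 0‖²`: equality in Schwarz–Pick at `0`. Hence `g` is
a disk automorphism, and `w = blaschkeFactor z₀ · (g ∘ blaschkeFactor z₀)` is a product of two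
Blaschke factors.
-/

open Complex Metric ComplexConjugate

open Set Topology

noncomputable def blaschkeFactor (v z : ℂ) : ℂ := (z - v) / (1 - conj v * z)

namespace blaschkeFactor

variable {v z : ℂ}

lemma apply_self (v : ℂ) : blaschkeFactor v v = 0 := by simp [blaschkeFactor]

lemma neg_apply_zero (v : ℂ) : blaschkeFactor (-v) 0 = v := by simp [blaschkeFactor]

lemma normSq_one_sub_conj_mul (v z : ℂ) :
    normSq (1 - conj v * z) = normSq (z - v) + (1 - normSq z) * (1 - normSq v) := by
  apply ofReal_injective
  push_cast
  simp only [← mul_conj, map_sub, map_mul, map_one, conj_conj]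
  ring

lemma one_sub_conj_mul_ne_zero (hv : ‖v‖ ≤ 1) (hz : ‖z‖ < 1) : 1 - conj v * z ≠ 0 := by
  refine sub_ne_zero.mpr fun h => ?_
  have : ‖conj v * z‖ < 1 := by
    rw [norm_mul, norm_conj]
    nlinarith [norm_nonneg v, norm_nonneg z]
  simp [← h] at this

lemma norm_lt_one (hv : ‖v‖ < 1) (hz : ‖z‖ < 1) : ‖blaschkeFactor v z‖ < 1 := by
  have hden := one_sub_conj_mul_ne_zero hv.le hz
  rw [blaschkeFactor, norm_div, div_lt_one (norm_pos_iff.mpr hden), norm_def, norm_def,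
    Real.sqrt_lt_sqrt_iff (normSq_nonneg _), normSq_one_sub_conj_mul]
  have hv' : normSq v < 1 := by rw [← Complex.sq_norm]; nlinarith [norm_nonneg v]
  have hz' : normSq z < 1 := by rw [← Complex.sq_norm]; nlinarith [norm_nonneg z]
  nlinarith

lemma mapsTo_ball (hv : ‖v‖ < 1) : MapsTo (blaschkeFactor v) (ball 0 1) (ball 0 1) :=
  fun _ hz => mem_ball_zero_iff.mpr (norm_lt_one hv (mem_ball_zero_iff.mp hz))

lemma neg_apply_apply (hv : ‖v‖ < 1) (hz : ‖z‖ < 1) :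
    blaschkeFactor (-v) (blaschkeFactor v z) = z := by
  have hden := one_sub_conj_mul_ne_zero hv.le hz
  have hv' : (1 : ℂ) - conj v * v ≠ 0 := one_sub_conj_mul_ne_zero hv.le hv
  have hnum : blaschkeFactor v z - -v = z * (1 - conj v * v) / (1 - conj v * z) := by
    rw [blaschkeFactor, eq_div_iff hden, sub_neg_eq_add, add_mul, div_mul_cancel₀ _ hden]
    ring
  have hden' : 1 - conj (-v) * blaschkeFactor v z = (1 - conj v * v) / (1 - conj v * z) := by
    rw [blaschkeFactor, eq_div_iff hden, map_neg, sub_mul, mul_assoc, neg_mul,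
      div_mul_cancel₀ _ hden]
    ring
  rw [blaschkeFactor, hnum, hden', div_div_div_cancel_right₀ hden, mul_div_cancel_right₀ _ hv']

lemma hasDerivAt (h : 1 - conj v * z ≠ 0) :
    HasDerivAt (blaschkeFactor v) ((1 - conj v * v) / (1 - conj v * z) ^ 2) z := by
  have hnum : HasDerivAt (fun t : ℂ => t - v) 1 z := (hasDerivAt_id z).sub_const v
  have hden : HasDerivAt (fun t : ℂ => 1 - conj v * t) (-conj v) z := by
    simpa using ((hasDerivAt_id z).const_mul (conj v)).const_sub 1
  exact (hnum.fun_div hden h).congr_deriv (by ring)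

lemma analyticAt (h : 1 - conj v * z ≠ 0) : AnalyticAt ℂ (blaschkeFactor v) z := by
  unfold blaschkeFactor
  fun_prop (disch := exact h)

lemma analyticAt_zero (v : ℂ) : AnalyticAt ℂ (blaschkeFactor v) 0 := analyticAt (by simp)

lemma differentiableOn_ball (hv : ‖v‖ < 1) : DifferentiableOn ℂ (blaschkeFactor v) (ball 0 1) :=
  fun _ hz => (hasDerivAt (one_sub_conj_mul_ne_zero hv.le (mem_ball_zero_iff.mp hz)))
    |>.differentiableAt.differentiableWithinAt

lemma one_sub_conj_mul_self (v : ℂ) : 1 - conj v * v = ((1 - ‖v‖ ^ 2 : ℝ) : ℂ) := by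
  rw [conj_mul']
  push_cast
  ring

lemma deriv_zero (v : ℂ) : deriv (blaschkeFactor v) 0 = ((1 - ‖v‖ ^ 2 : ℝ) : ℂ) := by
  simpa [one_sub_conj_mul_self] using (hasDerivAt (v := v) (z := 0) (by simp)).deriv

lemma hasDerivAt_self (hv : ‖v‖ < 1) :
    HasDerivAt (blaschkeFactor v) ((1 - ‖v‖ ^ 2 : ℝ) : ℂ)⁻¹ v := by
  have h := one_sub_conj_mul_ne_zero hv.le hv
  convert hasDerivAt h using 1
  rw [← one_sub_conj_mul_self]
  field_simp

lemma deriv_deriv_zero (v : ℂ) :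
    deriv (deriv (blaschkeFactor v)) 0 = 2 * conj v * ((1 - ‖v‖ ^ 2 : ℝ) : ℂ) := by
  have hev : deriv (blaschkeFactor v) =ᶠ[𝓝 0]
      fun t => (1 - conj v * v) / (1 - conj v * t) ^ 2 := by
    have hcont : ContinuousAt (fun t : ℂ => 1 - conj v * t) 0 := by fun_prop
    filter_upwards [hcont.eventually_ne (by simp : (1 : ℂ) - conj v * 0 ≠ 0)] with t ht
    exact (hasDerivAt ht).deriv
  have hden : HasDerivAt (fun t : ℂ => (1 - conj v * t) ^ 2) (2 * -conj v) 0 := by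
    simpa using (((hasDerivAt_id (0 : ℂ)).const_mul (conj v)).const_sub 1).fun_pow 2
  rw [hev.deriv_eq, ((hasDerivAt_const 0 (1 - conj v * v)).fun_div hden (by simp)).deriv,
    ← one_sub_conj_mul_self]
  ring

lemma exists_apply_mul_apply {c μ : ℂ} (hc : ‖c‖ < 1) (hμ : ‖μ‖ = 1) (hv : ‖v‖ < 1) :
    ∃ lam p : ℂ, ‖lam‖ = 1 ∧ ‖p‖ < 1 ∧ ∀ z, ‖z‖ < 1 →
      blaschkeFactor c (μ * blaschkeFactor v z) = lam * blaschkeFactor p z := by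
  set A := μ + c * conj v
  set C := μ * v + c
  have hμμ : μ * conj μ = 1 := by rw [mul_conj', hμ]; norm_num
  have hA : A ≠ 0 := by
    refine fun h => (?_ : ‖c * conj v‖ < ‖μ‖).ne ?_
    · rw [hμ, norm_mul, norm_conj]
      nlinarith [norm_nonneg c, norm_nonneg v]
    · rw [(eq_neg_of_add_eq_zero_left h : μ = _), norm_neg]
  have hAC : normSq A - normSq C = (1 - normSq c) * (1 - normSq v) := by
    apply ofReal_injective
    push_cast
    simp only [A, C, ← mul_conj, map_add, map_mul, conj_conj]
    linear_combination (1 - v * conj v) * hμμ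
  have hp : ‖C / A‖ < 1 := by
    have hc' : normSq c < 1 := by rw [← Complex.sq_norm]; nlinarith [norm_nonneg c]
    have hv' : normSq v < 1 := by rw [← Complex.sq_norm]; nlinarith [norm_nonneg v]
    rw [norm_div, div_lt_one (norm_pos_iff.mpr hA), norm_def, norm_def,
      Real.sqrt_lt_sqrt_iff (normSq_nonneg _)]
    nlinarith
  refine ⟨A / (μ * conj A), C / A, ?_, hp, fun z hz => ?_⟩
  · rw [norm_div, norm_mul, norm_conj, hμ, one_mul, div_self (norm_ne_zero_iff.mpr hA)]
  have hD := one_sub_conj_mul_ne_zero hv.le hz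
  have hAc : conj A ≠ 0 := by simpa using hA
  have hnum : μ * blaschkeFactor v z - c = A * (z - C / A) / (1 - conj v * z) := by
    rw [eq_div_iff hD, blaschkeFactor, mul_sub A, mul_div_cancel₀ _ hA, sub_mul, mul_div_assoc',
      div_mul_cancel₀ _ hD]
    ring
  have hden : 1 - conj c * (μ * blaschkeFactor v z) =
      μ * conj A * (1 - conj (C / A) * z) / (1 - conj v * z) := by
    have hAp : μ * conj A * (1 - conj (C / A) * z) = μ * conj A - μ * conj C * z := by
      rw [map_div₀]
      field_simp
    rw [hAp, eq_div_iff hD, blaschkeFactor, sub_mul, one_mul, mul_div_assoc', mul_div_assoc',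
      div_mul_cancel₀ _ hD]
    simp only [A, C, map_add, map_mul, conj_conj]
    linear_combination (conj v * z - 1) * hμμ
  rw [blaschkeFactor, hnum, hden, div_div_div_cancel_right₀ hD, blaschkeFactor, mul_div_mul_comm]

end blaschkeFactor

section SecondDerivative

variable {𝕜 : Type*} [NontriviallyNormedField 𝕜] [CompleteSpace 𝕜]

lemma deriv_deriv_eq_two_mul_deriv_dslope {f : 𝕜 → 𝕜} {c : 𝕜} (hf : AnalyticAt 𝕜 f c) :
    deriv (deriv f) c = 2 * deriv (dslope f c) c := by
  obtain ⟨p, hp⟩ := hf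
  have hslope : deriv (dslope f c) c = p.coeff 2 := by
    rw [hp.has_fpower_series_dslope_fslope.deriv]
    exact FormalMultilinearSeries.coeff_fslope
  obtain ⟨r, hr⟩ := hp
  have htaylor := hr.factorial_smul (1 : 𝕜) 2
  rw [← iteratedDeriv_eq_iteratedFDeriv, iteratedDeriv_succ, iteratedDeriv_one] at htaylor
  rw [hslope, ← htaylor, FormalMultilinearSeries.coeff]
  simp [Nat.factorial]

lemma deriv_deriv_comp_s11 {f ψ : 𝕜 → 𝕜} {c : 𝕜} (hf : AnalyticAt 𝕜 f (ψ c))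
    (hψ : AnalyticAt 𝕜 ψ c) :
    deriv (deriv (f ∘ ψ)) c =
      deriv (deriv f) (ψ c) * deriv ψ c ^ 2 + deriv f (ψ c) * deriv (deriv ψ) c := by
  have hev : deriv (f ∘ ψ) =ᶠ[𝓝 c] fun t => deriv f (ψ t) * deriv ψ t := by
    filter_upwards [hψ.continuousAt.eventually hf.eventually_analyticAt,
      hψ.eventually_analyticAt] with t hft hψt
    exact deriv_comp t hft.differentiableAt hψt.differentiableAt
  have hf' : HasDerivAt (fun t => deriv f (ψ t)) (deriv (deriv f) (ψ c) * deriv ψ c) c :=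
    hf.deriv.differentiableAt.hasDerivAt.comp c hψ.differentiableAt.hasDerivAt
  rw [hev.deriv_eq, (hf'.fun_mul hψ.deriv.differentiableAt.hasDerivAt).deriv]
  ring

end SecondDerivative

lemma Complex.mapsTo_ball_of_mapsTo_closedBall {E : Type*} [NormedAddCommGroup E]
    [NormedSpace ℂ E] {g : ℂ → E} {U : Set ℂ} {c : ℂ} {R : ℝ} (hU : IsPreconnected U)
    (hUo : IsOpen U) (hg : DifferentiableOn ℂ g U) (hmaps : MapsTo g U (closedBall 0 R))
    (hc : c ∈ U) (hgc : ‖g c‖ < R) : MapsTo g U (ball 0 R) := by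
  intro z hz
  have hle : ∀ t ∈ U, ‖g t‖ ≤ R := fun t ht => mem_closedBall_zero_iff.mp (hmaps ht)
  refine mem_ball_zero_iff.mpr ((hle z hz).lt_of_ne fun hzR => hgc.ne ?_)
  have hmax : IsMaxOn (norm ∘ g) U z := fun t ht => by simpa [hzR] using hle t ht
  rw [← hzR]
  exact norm_eqOn_of_isPreconnected_of_isMaxOn hU hUo hg hz hmax hc

lemma Complex.exists_eq_blaschkeFactor_of_norm_deriv_eq {g : ℂ → ℂ}
    (hg : DifferentiableOn ℂ g (ball 0 1)) (hmaps : MapsTo g (ball 0 1) (ball 0 1))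
    (heq : ‖deriv g 0‖ = 1 - ‖g 0‖ ^ 2) :
    ∃ μ : ℂ, ‖μ‖ = 1 ∧ ∀ z ∈ ball 0 1, g z = blaschkeFactor (-g 0) (μ * z) := by
  have h0 : (0 : ℂ) ∈ ball 0 1 := mem_ball_self one_pos
  have hg0 : ‖g 0‖ < 1 := mem_ball_zero_iff.mp (hmaps h0)
  set G := blaschkeFactor (g 0) ∘ g
  have hGd : DifferentiableOn ℂ G (ball 0 1) :=
    (blaschkeFactor.differentiableOn_ball hg0).comp hg hmaps
  have hGmaps : MapsTo G (ball 0 1) (closedBall (G 0) 1) := by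
    simpa [G, blaschkeFactor.apply_self] using
      ((blaschkeFactor.mapsTo_ball hg0).comp hmaps).mono_right ball_subset_closedBall
  have hG' : ‖dslope G 0 0‖ = 1 / 1 := by
    have hpos : 0 < 1 - ‖g 0‖ ^ 2 := by nlinarith [norm_nonneg (g 0)]
    rw [dslope_same, ((blaschkeFactor.hasDerivAt_self hg0).comp 0
      (hg.differentiableAt (isOpen_ball.mem_nhds h0)).hasDerivAt).deriv, norm_mul, heq, norm_inv,
      norm_real, Real.norm_of_nonneg hpos.le, inv_mul_cancel₀ hpos.ne', div_one]
  have hG := Complex.affine_of_mapsTo_ball_of_norm_dslope_eq_div hGd hGmaps h0 hG'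
  refine ⟨dslope G 0 0, by simpa using hG', fun z hz => ?_⟩
  have hGz : blaschkeFactor (g 0) (g z) = dslope G 0 0 * z := by
    simpa [G, blaschkeFactor.apply_self, mul_comm] using hG hz
  rw [← hGz, blaschkeFactor.neg_apply_apply hg0 (mem_ball_zero_iff.mp (hmaps hz))]

section ComposeWithBlaschkeFactor

variable {w : ℂ → ℂ} {v : ℂ}

lemma dslope_comp_blaschkeFactor_neg_zero_zero (hw : DifferentiableAt ℂ w v) :
    dslope (w ∘ blaschkeFactor (-v)) 0 0 = deriv w v * ((1 - ‖v‖ ^ 2 : ℝ) : ℂ) := by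
  rw [dslope_same, deriv_comp _ (by rwa [blaschkeFactor.neg_apply_zero])
    (blaschkeFactor.analyticAt_zero _).differentiableAt, blaschkeFactor.neg_apply_zero,
    blaschkeFactor.deriv_zero, norm_neg]

lemma deriv_dslope_comp_blaschkeFactor_neg_zero (hw : AnalyticAt ℂ w v)
    (hw'' : deriv (deriv w) v = 0) :
    deriv (dslope (w ∘ blaschkeFactor (-v)) 0) 0 =
      -conj v * dslope (w ∘ blaschkeFactor (-v)) 0 0 := by
  have hW : AnalyticAt ℂ (w ∘ blaschkeFactor (-v)) 0 :=
    (by rwa [blaschkeFactor.neg_apply_zero] : AnalyticAt ℂ w (blaschkeFactor (-v) 0)).comp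
      (blaschkeFactor.analyticAt_zero _)
  have h := deriv_deriv_comp_s11 (f := w) (by rwa [blaschkeFactor.neg_apply_zero])
    (blaschkeFactor.analyticAt_zero (-v))
  rw [deriv_deriv_eq_two_mul_deriv_dslope hW, blaschkeFactor.neg_apply_zero, hw'',
    blaschkeFactor.deriv_zero, blaschkeFactor.deriv_deriv_zero, norm_neg, map_neg] at h
  rw [dslope_comp_blaschkeFactor_neg_zero_zero hw.differentiableAt]
  linear_combination h / 2

lemma mapsTo_closedBall_dslope_comp_blaschkeFactor_neg (hw : DifferentiableOn ℂ w (ball 0 1))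
    (hmaps : MapsTo w (ball 0 1) (ball 0 1)) (hv : ‖v‖ < 1) (hw0 : w v = 0) :
    MapsTo (dslope (w ∘ blaschkeFactor (-v)) 0) (ball 0 1) (closedBall 0 1) := by
  have hψ : MapsTo (blaschkeFactor (-v)) (ball 0 1) (ball 0 1) :=
    blaschkeFactor.mapsTo_ball (by simpa using hv)
  have hW : MapsTo (w ∘ blaschkeFactor (-v)) (ball 0 1)
      (closedBall ((w ∘ blaschkeFactor (-v)) 0) 1) := by
    simpa [blaschkeFactor.neg_apply_zero, hw0] using
      (hmaps.comp hψ).mono_right ball_subset_closedBall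
  intro z hz
  simpa using Complex.norm_dslope_le_div_of_mapsTo_ball
    (hw.comp (blaschkeFactor.differentiableOn_ball (by simpa using hv)) hψ) hW hz

lemma eq_mul_dslope_comp_blaschkeFactor_neg {z : ℂ} (hv : ‖v‖ < 1) (hw0 : w v = 0)
    (hz : ‖z‖ < 1) :
    w z = blaschkeFactor v z * dslope (w ∘ blaschkeFactor (-v)) 0 (blaschkeFactor v z) := by
  have h := sub_smul_dslope (w ∘ blaschkeFactor (-v)) 0 (blaschkeFactor v z)
  simp only [Function.comp_apply, blaschkeFactor.neg_apply_apply hv hz,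
    blaschkeFactor.neg_apply_zero, hw0, sub_zero, smul_eq_mul] at h
  exact h.symm

end ComposeWithBlaschkeFactor

lemma sq_add_mul_eq_one_of_eq_sqrt {x a : ℝ} (ha : a = (√(4 + x ^ 2) - x) / 2) :
    a ^ 2 + x * a = 1 := by
  have hs : √(4 + x ^ 2) ^ 2 = 4 + x ^ 2 := Real.sq_sqrt (by positivity)
  rw [ha]
  linear_combination hs / 4

/-- Equality case of the refined Schwarz–Pick lemma: an extremal `w` is a Blaschke
product of degree 2. -/
theorem schwarz_pick_refined_eq (z₀ : ℂ) (hz₀ : z₀ ∈ ball (0 : ℂ) 1) (hz₀0 : z₀ ≠ 0)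
    (w : ℂ → ℂ) (hw : DifferentiableOn ℂ w (ball (0 : ℂ) 1))
    (hmaps : Set.MapsTo w (ball (0 : ℂ) 1) (ball (0 : ℂ) 1))
    (hw0 : w z₀ = 0) (hw'' : deriv (deriv w) z₀ = 0)
    (heq : ‖deriv w z₀‖ =
      (Real.sqrt (4 + ‖z₀‖ ^ 2) - ‖z₀‖) /
        (2 * (1 - ‖z₀‖ ^ 2))) :
    ∃ lam p : ℂ, ‖lam‖ = 1 ∧ p ∈ ball (0 : ℂ) 1 ∧
      ∀ z ∈ ball (0 : ℂ) 1,
        w z = lam * ((z - z₀) / (1 - conj z₀ * z)) * ((z - p) / (1 - conj p * z)) := by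
  have hx : ‖z₀‖ < 1 := mem_ball_zero_iff.mp hz₀
  have hx0 : 0 < ‖z₀‖ := norm_pos_iff.mpr hz₀0
  have hpos : 0 < 1 - ‖z₀‖ ^ 2 := by nlinarith
  have hwA : AnalyticAt ℂ w z₀ := hw.analyticAt (isOpen_ball.mem_nhds hz₀)
  have hg_zero := dslope_comp_blaschkeFactor_neg_zero_zero hwA.differentiableAt
  have hdg_zero := deriv_dslope_comp_blaschkeFactor_neg_zero hwA hw''
  have hgd := (differentiableOn_dslope (isOpen_ball.mem_nhds (mem_ball_self one_pos))).mpr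
    (hw.comp (blaschkeFactor.differentiableOn_ball (v := -z₀) (by simpa using hx))
      (blaschkeFactor.mapsTo_ball (by simpa using hx)))
  have hwg := fun z (hz : ‖z‖ < 1) => eq_mul_dslope_comp_blaschkeFactor_neg hx hw0 hz
  set g := dslope (w ∘ blaschkeFactor (-z₀)) 0
  have ha : ‖g 0‖ ^ 2 + ‖z₀‖ * ‖g 0‖ = 1 := by
    refine sq_add_mul_eq_one_of_eq_sqrt ?_
    rw [hg_zero, norm_mul, heq, norm_real, Real.norm_of_nonneg hpos.le]
    field_simp
  have hg0 : ‖g 0‖ < 1 := by nlinarith [norm_nonneg (g 0)]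
  have hgmaps : MapsTo g (ball 0 1) (ball 0 1) :=
    Complex.mapsTo_ball_of_mapsTo_closedBall (convex_ball 0 1).isPreconnected isOpen_ball hgd
      (mapsTo_closedBall_dslope_comp_blaschkeFactor_neg hw hmaps hx hw0) (mem_ball_self one_pos) hg0
  obtain ⟨μ, hμ, hgμ⟩ := Complex.exists_eq_blaschkeFactor_of_norm_deriv_eq hgd hgmaps (by
    rw [hdg_zero, norm_mul, norm_neg, norm_conj]
    linarith)
  obtain ⟨lam, p, hlam, hp, hcomp⟩ :=
    blaschkeFactor.exists_apply_mul_apply (c := -g 0) (by simpa using hg0) hμ hx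
  refine ⟨lam, p, hlam, mem_ball_zero_iff.mpr hp, fun z hz => ?_⟩
  have hz' : ‖z‖ < 1 := mem_ball_zero_iff.mp hz
  rw [hwg z hz', hgμ _ (blaschkeFactor.mapsTo_ball hx hz), hcomp z hz', blaschkeFactor,
    blaschkeFactor]
  ring
end

section
/- Let 0 < ρ < 1. There exists a locally univalent meromorphic function f on the open unit disk 𝔻 with f(0) = 0 satisfying f^♯(z) = 1/(1 − ρ²) for every z with |z| = ρ (i.e. a locally univalent map from (𝔻, hyperbolic metric) to the Riemann sphere that is length-preserving on the circle |z| = ρ and fixes 0) if and only if ρ ≤ √2 − 1. -/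
open Complex Metric ComplexConjugate

/-!
If `f^♯ = 1/(1-ρ²)` on `|z| = ρ`, then `2|f| ≤ 1 + |f|² = (1-ρ²)|f'|` there, so the quotient
`f/f'` is bounded by `(1-ρ²)/2` on that circle. This quotient is holomorphic on `𝔻` even at the
simple poles of `f`, where it equals `-(1/f)/(1/f)'`; it vanishes at `0` with derivative of
modulus `1`. Schwarz's lemma on the disk of radius `ρ` then gives `ρ ≤ (1-ρ²)/2`, that is
`ρ ≤ √2 - 1`. Conversely `f(z) = cz` works for a positive root `c` of
`ρ²c² - (1-ρ²)c + 1 = 0`, which exists exactly in that range.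
-/

open Set Filter Topology

lemma two_mul_le_one_sub_sq_iff {ρ : ℝ} (hρ : 0 ≤ ρ) :
    2 * ρ ≤ 1 - ρ ^ 2 ↔ ρ ≤ √2 - 1 := by
  rw [le_sub_iff_add_le (b := 1), Real.le_sqrt (by positivity) zero_le_two]
  constructor <;> intro h <;> nlinarith

lemma exists_pos_div_one_add_sq_eq {ρ : ℝ} (hρ0 : 0 < ρ) (hρ : 2 * ρ ≤ 1 - ρ ^ 2) :
    ∃ c : ℝ, 0 < c ∧ c / (1 + (c * ρ) ^ 2) = 1 / (1 - ρ ^ 2) := by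
  have hdisc : 0 ≤ discrim (ρ ^ 2) (-(1 - ρ ^ 2)) 1 := by
    rw [discrim]; nlinarith
  obtain ⟨c, hc⟩ := exists_quadratic_eq_zero (pow_pos hρ0 2).ne'
    ⟨√(discrim (ρ ^ 2) (-(1 - ρ ^ 2)) 1), (Real.mul_self_sqrt hdisc).symm⟩
  have h1 : 0 < 1 - ρ ^ 2 := by linarith
  have hcpos : 0 < c := by nlinarith [sq_nonneg (ρ * c)]
  refine ⟨c, hcpos, ?_⟩
  rw [div_eq_div_iff (by positivity) h1.ne']
  linear_combination (-1 : ℝ) * hc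

lemma mul_norm_deriv_le_of_norm_le_on_sphere {φ : ℂ → ℂ} {c : ℂ} {r M : ℝ} (hr : 0 < r)
    (hφ : DiffContOnCl ℂ φ (ball c r)) (hc : φ c = 0) (hM : ∀ z ∈ sphere c r, ‖φ z‖ ≤ M) :
    r * ‖deriv φ c‖ ≤ M := by
  have hmaps : MapsTo φ (ball c r) (closedBall (φ c) M) := fun z hz => by
    rw [hc, mem_closedBall_zero_iff]
    exact norm_le_of_forall_mem_frontier_norm_le isBounded_ball hφ
      (by rwa [frontier_ball c hr.ne']) (subset_closure hz)
  have := norm_deriv_le_div_of_mapsTo_ball hφ.differentiableOn hmaps hr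
  rwa [le_div_iff₀ hr, mul_comm] at this

lemma div_deriv_inv_apply {𝕜 : Type*} [NontriviallyNormedField 𝕜] {h : 𝕜 → 𝕜} {w : 𝕜}
    (hd : DifferentiableAt 𝕜 h w) : (h⁻¹ / deriv h⁻¹) w = -(h / deriv h) w := by
  by_cases hw : h w = 0
  · simp [hw]
  · rw [Pi.div_apply, Pi.div_apply, deriv_inv'' hd hw, Pi.inv_apply]
    by_cases hd' : deriv h w = 0
    · simp [hd']
    · field_simp

lemma div_deriv_eventuallyEq_of_analyticAt_inv {f : ℂ → ℂ} {z : ℂ}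
    (hf : AnalyticAt ℂ f⁻¹ z) : f / deriv f =ᶠ[𝓝 z] -(f⁻¹ / deriv f⁻¹) := by
  filter_upwards [hf.eventually_analyticAt] with w hw
  simpa using div_deriv_inv_apply hw.differentiableAt

lemma hasDerivAt_div_deriv_of_eq_zero {g : ℂ → ℂ} {z : ℂ} (hg : AnalyticAt ℂ g z)
    (h0 : g z = 0) (hd : deriv g z ≠ 0) : HasDerivAt (g / deriv g) 1 z := by
  have := hg.differentiableAt.hasDerivAt.div hg.deriv.differentiableAt.hasDerivAt hd
  rwa [h0, zero_mul, sub_zero, ← sq, div_self (pow_ne_zero 2 hd)] at this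

section LocallyUnivalent

variable {f : ℂ → ℂ} {z : ℂ}

lemma analyticAt_div_deriv (hm : MeroOnDisk f) (hu : LocUnivOnDisk f)
    (hz : z ∈ ball (0 : ℂ) 1) : AnalyticAt ℂ (f / deriv f) z := by
  by_cases hA : AnalyticAt ℂ f z
  · exact hA.div hA.deriv ((hu z hz).1 hA)
  · obtain ⟨hinv, -⟩ := (hm z hz).resolve_left hA
    have hinv : AnalyticAt ℂ f⁻¹ z := hinv
    exact (hinv.div hinv.deriv ((hu z hz).2 hA)).neg.congr
      (div_deriv_eventuallyEq_of_analyticAt_inv hinv).symm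

/-- At a pole, where `f` takes the junk value `0`, the derivative is `-1` rather than `1`. -/
lemma norm_deriv_div_deriv_of_eq_zero (hm : MeroOnDisk f) (hu : LocUnivOnDisk f)
    (hz : z ∈ ball (0 : ℂ) 1) (h0 : f z = 0) : ‖deriv (f / deriv f) z‖ = 1 := by
  by_cases hA : AnalyticAt ℂ f z
  · rw [(hasDerivAt_div_deriv_of_eq_zero hA h0 ((hu z hz).1 hA)).deriv, norm_one]
  · obtain ⟨hinv, hinv0⟩ := (hm z hz).resolve_left hA
    have hinv : AnalyticAt ℂ f⁻¹ z := hinv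
    have hderiv := (hasDerivAt_div_deriv_of_eq_zero hinv hinv0 ((hu z hz).2 hA)).neg
      |>.congr_of_eventuallyEq (div_deriv_eventuallyEq_of_analyticAt_inv hinv)
    rw [hderiv.deriv, norm_neg, norm_one]

lemma norm_div_deriv_le_of_sphDeriv_eq (hm : MeroOnDisk f) (hz : z ∈ ball (0 : ℂ) 1) {L : ℝ}
    (hL : 0 < L) (hs : sphDeriv f z = L) : ‖(f / deriv f) z‖ ≤ (2 * L)⁻¹ := by
  by_cases hA : AnalyticAt ℂ f z
  · rw [sphDeriv, if_pos hA, div_eq_iff (by positivity)] at hs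
    rw [Pi.div_apply, norm_div]
    refine div_le_of_le_mul₀ (norm_nonneg _) (by positivity) ?_
    have : (2 * L)⁻¹ * ‖deriv f z‖ = (‖f z‖ ^ 2 + 1 ^ 2) / 2 := by
      rw [hs]; field_simp; ring
    linarith [two_mul_le_add_sq ‖f z‖ 1]
  · have hf : f z = 0 := inv_eq_zero.mp ((hm z hz).resolve_left hA).2
    simp [hf, hL.le]

end LocallyUnivalent

section ConstMul

variable (c : ℂ)

lemma analyticAt_const_mul_id (z : ℂ) : AnalyticAt ℂ (fun w => c * w) z := by fun_prop

lemma meroOnDisk_const_mul : MeroOnDisk (fun w => c * w) :=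
  fun z _ => Or.inl (analyticAt_const_mul_id c z)

lemma locUnivOnDisk_const_mul (hc : c ≠ 0) : LocUnivOnDisk (fun w => c * w) :=
  fun z _ => ⟨fun _ => by rwa [deriv_const_mul_id],
    fun h => (h (analyticAt_const_mul_id c z)).elim⟩

lemma sphDeriv_const_mul (z : ℂ) :
    sphDeriv (fun w => c * w) z = ‖c‖ / (1 + (‖c‖ * ‖z‖) ^ 2) := by
  rw [sphDeriv, if_pos (analyticAt_const_mul_id c z), deriv_const_mul_id, norm_mul]

end ConstMul

/-- There exists a locally univalent meromorphic map of `(𝔻, hyperbolic)` to the sphere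
fixing `0` which is length-preserving on the circle `|z| = ρ` iff `ρ ≤ √2 - 1`. -/
theorem exists_length_preserving_iff (ρ : ℝ) (hρ0 : 0 < ρ) (hρ1 : ρ < 1) :
    (∃ f : ℂ → ℂ, MeroOnDisk f ∧ LocUnivOnDisk f ∧ f 0 = 0 ∧
      ∀ z : ℂ, ‖z‖ = ρ → sphDeriv f z = 1 / (1 - ρ ^ 2)) ↔
      ρ ≤ Real.sqrt 2 - 1 := by
  rw [← two_mul_le_one_sub_sq_iff hρ0.le]
  have h1 : 0 < 1 - ρ ^ 2 := by nlinarith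
  constructor
  · rintro ⟨f, hm, hu, h0, hs⟩
    have hdisk : closedBall (0 : ℂ) ρ ⊆ ball 0 1 := closedBall_subset_ball hρ1
    have hφ : DiffContOnCl ℂ (f / deriv f) (ball 0 ρ) :=
      DifferentiableOn.diffContOnCl fun z hz =>
        have hz' := hdisk (closure_ball_subset_closedBall hz)
        (analyticAt_div_deriv hm hu hz').differentiableAt.differentiableWithinAt
    have hsphere : ∀ z ∈ sphere (0 : ℂ) ρ, ‖(f / deriv f) z‖ ≤ (1 - ρ ^ 2) / 2 := by
      intro z hz
      have := norm_div_deriv_le_of_sphDeriv_eq hm (hdisk (sphere_subset_closedBall hz))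
        (by positivity) (hs z (mem_sphere_zero_iff_norm.mp hz))
      rwa [mul_one_div, inv_div] at this
    have hschwarz := mul_norm_deriv_le_of_norm_le_on_sphere hρ0 hφ (by simp [h0]) hsphere
    rw [norm_deriv_div_deriv_of_eq_zero hm hu (mem_ball_self one_pos) h0] at hschwarz
    linarith
  · intro hρ
    obtain ⟨c, hc, hcρ⟩ := exists_pos_div_one_add_sq_eq hρ0 hρ
    refine ⟨fun w => c * w, meroOnDisk_const_mul _,
      locUnivOnDisk_const_mul _ (by exact_mod_cast hc.ne'), mul_zero _, fun z hz => ?_⟩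
    rwa [sphDeriv_const_mul, hz, Complex.norm_real, Real.norm_of_nonneg hc.le]
end

section
/- Let c = 1/2 and let g : 𝔻 → ℂ be holomorphic with g(0) = 0, g'(0) > 0, and g'(z) ≠ 0 for all z ∈ 𝔻 (locally univalent). Then g satisfies the Beurling boundary condition lim_{|z|→1}(|g'(z)| − (1/2)(1 + |g(z)|²)) = 0 (i.e. for every ε > 0 there exists r ∈ (0,1) such that ||g'(z)| − (1/2)(1 + |g(z)|²)| < ε whenever r < |z| < 1) if and only if g(z) = z for all z ∈ 𝔻; that is, the identity is the only locally univalent solution. -/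
/-!
The quotient `h = g / g'` is holomorphic on the disk with `h 0 = 0` and `h' 0 = 1`. Near the unit
circle `|g'| ≈ (1 + |g|²) / 2 ≥ |g|`, so `|h|` is asymptotically at most `1` there and, by the
maximum principle, `|h| ≤ 1` on the disk. The equality case of the Schwarz lemma forces `h = id`,
i.e. `g = z g'`; differentiating gives `z g'' = 0`, so `g = c z`. For `g = c z` the boundary
condition reads `|c| - (1 + |c|²) / 2 = -(|c| - 1)² / 2 = 0`, and the normalization `g'(0) > 0`
leaves `c = 1`.
-/

open Complex Metric Filter Topology Set

noncomputable def beurlingDefect (g : ℂ → ℂ) (z : ℂ) : ℝ := ‖deriv g z‖ - 1 / 2 * (1 + ‖g z‖ ^ 2)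

theorem eventually_comap_norm_nhdsLT_iff {E : Type*} [Norm E] {R : ℝ} {P : E → Prop} :
    (∀ᶠ x in comap (‖·‖) (𝓝[<] R), P x) ↔ ∃ r < R, ∀ x, r < ‖x‖ → ‖x‖ < R → P x := by
  simp [((nhdsLT_basis R).comap _).eventually_iff]

theorem tendsto_comap_norm_nhdsLT_one_iff {F : ℂ → ℝ} {a : ℝ} :
    Tendsto F (comap (‖·‖) (𝓝[<] 1)) (𝓝 a) ↔
      ∀ ε > 0, ∃ r ∈ Ioo (0 : ℝ) 1, ∀ z : ℂ, r < ‖z‖ → ‖z‖ < 1 → |F z - a| < ε := by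
  simp only [Metric.tendsto_nhds, eventually_comap_norm_nhdsLT_iff, Real.dist_eq]
  refine forall₂_congr fun ε _ => ⟨fun ⟨r, hr, hP⟩ => ?_, fun ⟨r, hr, hP⟩ => ⟨r, hr.2, hP⟩⟩
  exact ⟨max r (1 / 2), ⟨by positivity, max_lt hr (by norm_num)⟩,
    fun z hz => hP z ((le_max_left _ _).trans_lt hz)⟩

theorem norm_le_of_forall_eventually_norm_le {E : Type*} [NormedAddCommGroup E]
    [NormedSpace ℂ E] {f : ℂ → E} {R C : ℝ} (hf : DifferentiableOn ℂ f (ball 0 R))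
    (hC : ∀ δ > 0, ∀ᶠ z in comap (‖·‖) (𝓝[<] R), ‖f z‖ ≤ C + δ) {z : ℂ} (hz : z ∈ ball 0 R) :
    ‖f z‖ ≤ C := by
  refine le_of_forall_pos_le_add fun δ hδ => ?_
  obtain ⟨r, hrR, hr⟩ := eventually_comap_norm_nhdsLT_iff.1 (hC δ hδ)
  obtain ⟨s, hs, hsR⟩ := exists_between (max_lt hrR (mem_ball_zero_iff.1 hz))
  have hs0 : s ≠ 0 := ((norm_nonneg z).trans_lt ((le_max_right _ _).trans_lt hs)).ne'
  have hdiff : DiffContOnCl ℂ f (ball 0 s) :=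
    hf.diffContOnCl_ball (closedBall_subset_ball hsR)
  refine norm_le_of_forall_mem_frontier_norm_le isBounded_ball hdiff (fun w hw => ?_)
    (subset_closure (mem_ball_zero_iff.2 ((le_max_right _ _).trans_lt hs)))
  rw [frontier_ball 0 hs0, mem_sphere_zero_iff_norm] at hw
  exact hr w (hw ▸ (le_max_left _ _).trans_lt hs) (hw ▸ hsR)

theorem le_one_add_mul_of_half_one_add_sq_sub_lt {t D δ : ℝ} (hδ0 : 0 ≤ δ) (hδ1 : δ ≤ 1)
    (h : 1 / 2 * (1 + t ^ 2) - δ / 4 < D) : t ≤ (1 + δ) * D := by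
  nlinarith [sq_nonneg (t - 1), mul_nonneg hδ0 (sq_nonneg t), mul_nonneg hδ0 (sub_nonneg.2 hδ1)]

theorem eqOn_id_of_norm_le_of_deriv_zero_eq_one {f : ℂ → ℂ} {R : ℝ}
    (hf : DifferentiableOn ℂ f (ball 0 R)) (hle : ∀ z ∈ ball 0 R, ‖f z‖ ≤ R) (h0 : f 0 = 0)
    (h'0 : deriv f 0 = 1) : EqOn f id (ball 0 R) := by
  intro z hz
  have hR : 0 < R := pos_of_mem_ball hz
  have hmaps : MapsTo f (ball 0 R) (closedBall (f 0) R) := fun w hw => by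
    simpa [h0] using hle w hw
  have := affine_of_mapsTo_ball_of_norm_dslope_eq_div hf hmaps (mem_ball_self hR)
    (by rw [dslope_same, h'0, norm_one, div_self hR.ne']) hz
  simpa [h0, h'0] using this

theorem deriv_div_deriv_of_eq_zero {𝕜 : Type*} [NontriviallyNormedField 𝕜] {g : 𝕜 → 𝕜} {a : 𝕜}
    (ha : g a = 0) (hg' : DifferentiableAt 𝕜 (deriv g) a) (h : deriv g a ≠ 0) :
    deriv (fun z => g z / deriv g z) a = 1 := by
  rw [deriv_fun_div (differentiableAt_of_deriv_ne_zero h) hg' h, ha, zero_mul, sub_zero,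
    ← sq, div_self (pow_ne_zero 2 h)]

theorem eqOn_deriv_zero_mul_of_eqOn_mul_deriv {g : ℂ → ℂ} {U : Set ℂ} (hU : IsOpen U)
    (hU' : IsPreconnected U) (h0 : 0 ∈ U) (hg : DifferentiableOn ℂ g U)
    (h : EqOn g (fun z => z * deriv g z) U) : EqOn g (fun z => deriv g 0 * z) U := by
  have hA : AnalyticOnNhd ℂ (deriv g) U := (hg.analyticOnNhd hU).deriv
  have hmul : ∀ z ∈ U, z * deriv (deriv g) z = 0 := fun z hz => by
    have hloc : g =ᶠ[𝓝 z] fun w => w * deriv g w := eventually_of_mem (hU.mem_nhds hz) h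
    have := hloc.deriv_eq
    rw [deriv_fun_mul differentiableAt_fun_id (hA z hz).differentiableAt, deriv_id'',
      one_mul] at this
    linear_combination -this
  have hzero : EqOn (deriv (deriv g)) 0 U := by
    refine hA.deriv.eqOn_zero_of_preconnected_of_frequently_eq_zero hU' h0 (Eventually.frequently ?_)
    filter_upwards [nhdsWithin_le_nhds (hU.mem_nhds h0), self_mem_nhdsWithin] with w hw hw0
    exact (mul_eq_zero.1 (hmul w hw)).resolve_left hw0
  intro z hz
  simp only [h hz, hU.is_const_of_deriv_eq_zero hU' hA.differentiableOn hzero hz h0, mul_comm]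

theorem tendsto_beurling_of_eqOn_const_mul {g : ℂ → ℂ} {c : ℂ}
    (h : EqOn g (fun z => c * z) (ball 0 1)) :
    Tendsto (beurlingDefect g) (comap (‖·‖) (𝓝[<] 1)) (𝓝 (‖c‖ - 1 / 2 * (1 + ‖c‖ ^ 2))) := by
  have hnorm : Tendsto (fun z : ℂ => ‖z‖) (comap (‖·‖) (𝓝[<] 1)) (𝓝 (1 : ℝ)) :=
    tendsto_comap.mono_right nhdsWithin_le_nhds
  have hφ : Continuous fun t : ℝ => ‖c‖ - 1 / 2 * (1 + (‖c‖ * t) ^ 2) := by fun_prop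
  have hlim := (hφ.tendsto 1).comp hnorm
  refine (hlim.congr' ?_).trans_eq ?_
  · filter_upwards [tendsto_comap.eventually self_mem_nhdsWithin] with z hz
    have hz : z ∈ ball 0 1 := mem_ball_zero_iff.2 hz
    have hloc : g =ᶠ[𝓝 z] fun w => c * w := eventually_of_mem (isOpen_ball.mem_nhds hz) h
    simp [beurlingDefect, hloc.deriv_eq, h hz]
  · simp

theorem eventually_norm_div_deriv_le {g : ℂ → ℂ} {l : Filter ℂ}
    (H : Tendsto (beurlingDefect g) l (𝓝 0)) {δ : ℝ} (hδ : 0 < δ) :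
    ∀ᶠ z in l, ‖g z / deriv g z‖ ≤ 1 + δ := by
  have hδ' : 0 < min δ 1 := lt_min hδ one_pos
  filter_upwards [H.eventually_const_lt (by linarith : -(min δ 1 / 4) < 0)] with z hz
  rw [beurlingDefect] at hz
  have hD : 0 < ‖deriv g z‖ := by nlinarith [min_le_right δ 1, sq_nonneg ‖g z‖]
  rw [norm_div, div_le_iff₀ hD]
  calc ‖g z‖ ≤ (1 + min δ 1) * ‖deriv g z‖ :=
        le_one_add_mul_of_half_one_add_sq_sub_lt hδ'.le (min_le_right _ _) (by linarith)
    _ ≤ (1 + δ) * ‖deriv g z‖ := by gcongr; exact min_le_left _ _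

theorem eqOn_div_deriv_id_of_tendsto_beurling {g : ℂ → ℂ}
    (hg : DifferentiableOn ℂ g (ball 0 1)) (hg0 : g 0 = 0) (hg' : ∀ z ∈ ball 0 1, deriv g z ≠ 0)
    (H : Tendsto (beurlingDefect g) (comap (‖·‖) (𝓝[<] 1)) (𝓝 0)) :
    EqOn (fun z => g z / deriv g z) id (ball 0 1) := by
  have h0 : (0 : ℂ) ∈ ball 0 1 := mem_ball_self one_pos
  have hg'A : AnalyticOnNhd ℂ (deriv g) (ball 0 1) := (hg.analyticOnNhd isOpen_ball).deriv
  have hdiv : DifferentiableOn ℂ (fun z => g z / deriv g z) (ball 0 1) :=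
    hg.div hg'A.differentiableOn hg'
  refine eqOn_id_of_norm_le_of_deriv_zero_eq_one hdiv (fun z hz => ?_) (by simp [hg0])
    (deriv_div_deriv_of_eq_zero hg0 (hg'A 0 h0).differentiableAt (hg' 0 h0))
  exact norm_le_of_forall_eventually_norm_le hdiv (fun δ hδ => eventually_norm_div_deriv_le H hδ) hz

theorem comap_norm_nhdsLT_neBot {R : ℝ} (hR : 0 < R) : (comap (fun z : ℂ => ‖z‖) (𝓝[<] R)).NeBot :=
  NeBot.comap_of_range_mem inferInstance
    (Complex.range_norm ▸ mem_nhdsWithin_of_mem_nhds (Ici_mem_nhds hR))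

theorem norm_eq_one_of_tendsto_beurling {g : ℂ → ℂ} {c : ℂ}
    (h : EqOn g (fun z => c * z) (ball 0 1))
    (H : Tendsto (beurlingDefect g) (comap (‖·‖) (𝓝[<] 1)) (𝓝 0)) :
    ‖c‖ = 1 := by
  have := comap_norm_nhdsLT_neBot one_pos
  have hlim := tendsto_nhds_unique H (tendsto_beurling_of_eqOn_const_mul h)
  nlinarith [sq_nonneg (‖c‖ - 1)]

theorem Complex.eq_one_of_norm_eq_one_of_re_pos {c : ℂ} (hnorm : ‖c‖ = 1) (hre : 0 < c.re)
    (him : c.im = 0) : c = 1 := by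
  have hc : c = c.re := Complex.ext rfl (by simpa using him)
  rw [hc, Complex.norm_real, Real.norm_of_nonneg hre.le] at hnorm
  rw [hc, hnorm, ofReal_one]

/-- For `c = 1/2`, the identity is the only locally univalent solution `g ∈ ℋ₀(𝔻)` of
the Beurling boundary value problem `lim_{|z|→1} (|g'(z)| - (1/2)(1+|g(z)|²)) = 0`. -/
theorem beurling_spherical_critical (g : ℂ → ℂ)
    (hg : DifferentiableOn ℂ g (ball (0 : ℂ) 1)) (hg0 : g 0 = 0)
    (hg'0re : 0 < (deriv g 0).re) (hg'0im : (deriv g 0).im = 0)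
    (hg' : ∀ z ∈ ball (0 : ℂ) 1, deriv g z ≠ 0) :
    (∀ ε > (0 : ℝ), ∃ r ∈ Set.Ioo (0 : ℝ) 1, ∀ z : ℂ,
        r < ‖z‖ → ‖z‖ < 1 →
          |‖deriv g z‖ - (1 / 2) * (1 + ‖g z‖ ^ 2)| < ε) ↔
      (∀ z ∈ ball (0 : ℂ) 1, g z = z) := by
  have hiff := tendsto_comap_norm_nhdsLT_one_iff (F := beurlingDefect g) (a := 0)
  simp only [sub_zero] at hiff
  refine hiff.symm.trans ⟨?_, ?_⟩
  · intro H
    have hid := eqOn_div_deriv_id_of_tendsto_beurling hg hg0 hg' H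
    have hlin := eqOn_deriv_zero_mul_of_eqOn_mul_deriv isOpen_ball (convex_ball 0 1).isPreconnected
      (mem_ball_self one_pos) hg fun z hz => (div_eq_iff (hg' z hz)).1 (hid hz)
    have hc : deriv g 0 = 1 :=
      eq_one_of_norm_eq_one_of_re_pos (norm_eq_one_of_tendsto_beurling hlin H) hg'0re hg'0im
    intro z hz
    simpa [hc] using hlin hz
  · intro hid
    refine (tendsto_beurling_of_eqOn_const_mul (c := 1) fun z hz => ?_).trans_eq (by norm_num)
    simp [hid z hz]
end

section
/- Let c > 1/2. Then there is no holomorphic function g : 𝔻 → ℂ with g(0) = 0, g'(0) > 0, and g'(z) ≠ 0 for all z ∈ 𝔻 (locally univalent) that satisfies the Beurling boundary condition lim_{|z|→1}(|g'(z)| − c(1 + |g(z)|²)) = 0 (i.e. for every ε > 0 there exists r ∈ (0,1) such that ||g'(z)| − c(1 + |g(z)|²)| < ε whenever r < |z| < 1). -/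
open Complex Metric ComplexConjugate

/-!
Apply the maximum modulus principle to the holomorphic function `q(z) = g(z) / (z g'(z))`,
which equals `1` at the origin: on every circle `|z| = r` there is a point with
`r |g'(z)| ≤ |g(z)|`. Near the boundary `|g'(z)| ≈ c (1 + |g(z)|²) ≥ 2c |g(z)|`, which is
incompatible with `r |g'(z)| ≤ |g(z)|` once `2cr > 1`.
-/

theorem exists_mem_sphere_norm_apply_zero_le {f : ℂ → ℂ} {R r : ℝ}
    (hf : DifferentiableOn ℂ f (ball 0 R)) (hr : 0 < r) (hrR : r < R) :
    ∃ z ∈ sphere (0 : ℂ) r, ‖f 0‖ ≤ ‖f z‖ := by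
  have hclosure : closure (ball (0 : ℂ) r) = closedBall 0 r := closure_ball _ hr.ne'
  have hcont : DiffContOnCl ℂ f (ball 0 r) :=
    ⟨hf.mono (ball_subset_ball hrR.le),
      hclosure ▸ hf.continuousOn.mono (closedBall_subset_ball hrR)⟩
  obtain ⟨z, hz, hmax⟩ :=
    exists_mem_frontier_isMaxOn_norm isBounded_ball (nonempty_ball.mpr hr) hcont
  rw [frontier_ball _ hr.ne'] at hz
  exact ⟨z, hz, hmax (hclosure ▸ mem_closedBall_self hr.le)⟩

theorem exists_mem_sphere_mul_norm_deriv_le_norm {g : ℂ → ℂ} {R r : ℝ}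
    (hg : DifferentiableOn ℂ g (ball 0 R)) (hg0 : g 0 = 0)
    (hg' : ∀ z ∈ ball (0 : ℂ) R, deriv g z ≠ 0) (hr : 0 < r) (hrR : r < R) :
    ∃ z ∈ sphere (0 : ℂ) r, r * ‖deriv g z‖ ≤ ‖g z‖ := by
  have hball : ball (0 : ℂ) R ∈ nhds 0 := ball_mem_nhds 0 (hr.trans hrR)
  have hq : DifferentiableOn ℂ (fun z => dslope g 0 z / deriv g z) (ball 0 R) :=
    ((differentiableOn_dslope hball).mpr hg).div
      (hg.analyticOnNhd isOpen_ball).deriv.differentiableOn hg'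
  obtain ⟨z, hz, hle⟩ := exists_mem_sphere_norm_apply_zero_le hq hr hrR
  have hzr : ‖z‖ = r := mem_sphere_zero_iff_norm.mp hz
  have hz0 : z ≠ 0 := norm_pos_iff.mp (hzr ▸ hr)
  have hgz : 0 < r * ‖deriv g z‖ :=
    mul_pos hr (norm_pos_iff.mpr (hg' z (sphere_subset_ball hrR hz)))
  have hq0 : dslope g 0 0 / deriv g 0 = 1 := by
    rw [dslope_same]
    exact div_self (hg' 0 (mem_ball_self (hr.trans hrR)))
  have hqz : ‖dslope g 0 z / deriv g z‖ = ‖g z‖ / (r * ‖deriv g z‖) := by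
    rw [dslope_of_ne _ hz0, slope_def_field, hg0, sub_zero, sub_zero, div_div, norm_div,
      norm_mul, hzr]
  rw [hq0, norm_one, hqz, one_le_div hgz] at hle
  exact ⟨z, hz, hle⟩

theorem two_mul_mul_sub_lt_one {r A X c ε : ℝ} (hr : 0 < r) (hε : 0 ≤ ε)
    (hrA : r * A ≤ X) (hA : c * (1 + X ^ 2) - ε < A) :
    2 * r * (c - ε) < 1 := by
  have hX : 0 < 1 + X ^ 2 := by positivity
  -- `c (1 + X²) - ε ≥ (c - ε)(1 + X²)` and `1 + X² ≥ 2X`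
  have h : r * ((c - ε) * (1 + X ^ 2)) < (1 + X ^ 2) / 2 := by
    nlinarith [sq_nonneg (X - 1), mul_nonneg hε (sq_nonneg X)]
  nlinarith

/-- For `c > 1/2`, the Beurling boundary value problem
`lim_{|z|→1} (|g'(z)| - c(1+|g(z)|²)) = 0` has no locally univalent solution in `ℋ₀(𝔻)`. -/
theorem beurling_spherical_supercritical (c : ℝ) (hc : 1 / 2 < c) :
    ¬ ∃ g : ℂ → ℂ, DifferentiableOn ℂ g (ball (0 : ℂ) 1) ∧ g 0 = 0 ∧
      0 < (deriv g 0).re ∧ (deriv g 0).im = 0 ∧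
      (∀ z ∈ ball (0 : ℂ) 1, deriv g z ≠ 0) ∧
      (∀ ε > (0 : ℝ), ∃ r ∈ Set.Ioo (0 : ℝ) 1, ∀ z : ℂ,
        r < ‖z‖ → ‖z‖ < 1 →
          |‖deriv g z‖ - c * (1 + ‖g z‖ ^ 2)| < ε) := by
  rintro ⟨g, hg, hg0, -, -, hg', hbc⟩
  set ε := (2 * c - 1) / 4 with hε_def
  have hε : 0 < ε := by linarith
  obtain ⟨r₀, ⟨hr₀, hr₀1⟩, hboundary⟩ := hbc ε hε
  -- `2 / (2c + 1)` is where `2 r (c - ε) = 1`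
  set r := max ((r₀ + 1) / 2) (2 / (2 * c + 1))
  have hr₀r : r₀ < r := lt_max_of_lt_left (by linarith)
  have hr1 : r < 1 := max_lt (by linarith) ((div_lt_one (by linarith)).mpr (by linarith))
  have hcr : 1 ≤ 2 * r * (c - ε) := by
    have : 2 / (2 * c + 1) ≤ r := le_max_right _ _
    rw [div_le_iff₀ (by linarith)] at this
    rw [hε_def]
    linarith
  obtain ⟨z, hz, hrz⟩ :=
    exists_mem_sphere_mul_norm_deriv_le_norm hg hg0 hg' (hr₀.trans hr₀r) hr1
  have hzr : ‖z‖ = r := mem_sphere_zero_iff_norm.mp hz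
  have hA := (abs_lt.mp (hboundary z (hzr ▸ hr₀r) (hzr ▸ hr1))).1
  exact (two_mul_mul_sub_lt_one (hr₀.trans hr₀r) hε.le hrz (by linarith)).not_ge hcr
end
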